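/- arXiv:1609.00341 — 15 statements merged into one kernel-verified Lean document; each statement's English description precedes it below -/
import Mathlib

section
/- If S : X → X is a set-valued operator on a Euclidean space X that is (C, γ, β)-quasi firmly Fejér monotone on a set U (i.e., for all x ∈ U, x₊ ∈ Sx, x̄ ∈ C: ‖x₊ - x̄‖² + β‖x - x₊‖² ≤ γ‖x - x̄‖²), and λ ∈ (0, 1+β], then the operator T := (1-λ)Id + λS is (C, γ', β')-quasi firmly Fejér monotone on U with γ' = 1 - λ + λγ and β' = (1 - λ + β)/λ. -/
open Metric Set

/-- averaged quasi firmly Fejér monotone operators. -/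
theorem averaged_quasi_firmly_fejer
    {X : Type*} [NormedAddCommGroup X] [InnerProductSpace ℝ X] [FiniteDimensional ℝ X]
    (C U : Set X) (hC : C.Nonempty) (hU : U.Nonempty)
    (γ β l : ℝ) (hγ : 1 ≤ γ) (hβ : 0 ≤ β) (hl0 : 0 < l) (hl1 : l ≤ 1 + β)
    (S : X → Set X)
    (hS : ∀ x ∈ U, ∀ xp ∈ S x, ∀ xb ∈ C,
      ‖xp - xb‖ ^ 2 + β * ‖x - xp‖ ^ 2 ≤ γ * ‖x - xb‖ ^ 2) :
    ∀ x ∈ U, ∀ xp ∈ {y | ∃ s ∈ S x, y = (1 - l) • x + l • s}, ∀ xb ∈ C,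
      ‖xp - xb‖ ^ 2 + ((1 - l + β) / l) * ‖x - xp‖ ^ 2
        ≤ (1 - l + l * γ) * ‖x - xb‖ ^ 2 := by
  intro x hx xp hxp xb hxb
  obtain ⟨s, hs, rfl⟩ := hxp
  have hS' := hS x hx s hs xb hxb
  have key : ∀ a b : X, ‖(1 - l) • a + l • b‖ ^ 2
      = (1 - l) * ‖a‖ ^ 2 + l * ‖b‖ ^ 2 - l * (1 - l) * ‖a - b‖ ^ 2 := by
    intro a b
    rw [norm_add_sq_real, norm_sub_sq_real, norm_smul, norm_smul,
      real_inner_smul_left, real_inner_smul_right]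
    simp only [Real.norm_eq_abs, mul_pow, sq_abs]
    ring
  have e1 : ((1 - l) • x + l • s) - xb = (1 - l) • (x - xb) + l • (s - xb) := by
    module
  have e2 : x - ((1 - l) • x + l • s) = l • (x - s) := by
    module
  rw [e1, e2, key, norm_smul]
  simp only [Real.norm_eq_abs, mul_pow, sq_abs]
  have e3 : (x - xb) - (s - xb) = x - s := by abel
  rw [e3]
  have hd : (1 - l + β) / l * (l ^ 2 * ‖x - s‖ ^ 2) = l * (1 - l + β) * ‖x - s‖ ^ 2 := by
    field_simp
  rw [hd]
  nlinarith [hS', sq_nonneg ‖x - s‖, sq_nonneg ‖x - xb‖, hl0.le]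
end

section
/- Let C be a nonempty closed subset of a Euclidean space X, w ∈ C, ε ∈ [0,1), δ > 0, and suppose C is (ε, δ)-regular at w. Then the projector P_C is (C ∩ B(w,δ), 1/(1-ε), 1)-quasi firmly Fejér monotone on B(w, δ/2); that is, for all x ∈ B(w, δ/2), p ∈ P_C x, and x̄ ∈ C ∩ B(w, δ): ‖p - x̄‖² + ‖x - p‖² ≤ (1/(1-ε))‖x - x̄‖². -/
open Metric Set RealInnerProductSpace

/-- The metric projection of `x` onto `C`, as a set. -/
noncomputable def projSet {X : Type*} [NormedAddCommGroup X]
    (C : Set X) (x : X) : Set X :=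
  {p | p ∈ C ∧ dist x p = Metric.infDist x C}

/-- The proximal normal cone to `C` at `x`. -/
noncomputable def proxNormalCone {X : Type*} [NormedAddCommGroup X] [Module ℝ X]
    (C : Set X) (x : X) : Set X :=
  {u | ∃ l : ℝ, 0 ≤ l ∧ ∃ z : X, x ∈ projSet C z ∧ u = l • (z - x)}

/-- `C` is `(ε, δ)`-regular at `w`. -/
def EpsDeltaRegular {X : Type*} [NormedAddCommGroup X] [InnerProductSpace ℝ X]
    (C : Set X) (w : X) (ε δ : ℝ) : Prop :=
  ∀ x ∈ C ∩ closedBall w δ, ∀ y ∈ C ∩ closedBall w δ, ∀ u ∈ proxNormalCone C x,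
    ⟪u, x - y⟫ ≥ -ε * (‖u‖ * ‖x - y‖)

/-- for an `(ε,δ)`-regular set, the projector is
`(C ∩ B(w,δ), 1/(1-ε), 1)`-quasi firmly Fejér monotone on `B(w, δ/2)`. -/
theorem projector_quasi_firmly_fejer_of_regular
    {X : Type*} [NormedAddCommGroup X] [InnerProductSpace ℝ X] [FiniteDimensional ℝ X]
    (C : Set X) (hCne : C.Nonempty) (hCcl : IsClosed C)
    (w : X) (hw : w ∈ C) (ε δ : ℝ) (hε0 : 0 ≤ ε) (hε1 : ε < 1) (hδ : 0 < δ)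
    (hreg : EpsDeltaRegular C w ε δ) :
    ∀ x ∈ closedBall w (δ / 2), ∀ p ∈ projSet C x, ∀ xb ∈ C ∩ closedBall w δ,
      ‖p - xb‖ ^ 2 + ‖x - p‖ ^ 2 ≤ (1 / (1 - ε)) * ‖x - xb‖ ^ 2 := by
  intro x hx p hp xb hxb
  obtain ⟨hpC, hpd⟩ := hp
  have hxw : dist x w ≤ δ / 2 := mem_closedBall.mp hx
  have hxp : dist x p ≤ δ / 2 := by
    rw [hpd]; exact le_trans (Metric.infDist_le_dist_of_mem hw) hxw
  have hpw : p ∈ closedBall w δ := by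
    rw [mem_closedBall]
    calc dist p w ≤ dist p x + dist x w := dist_triangle _ _ _
      _ ≤ δ / 2 + δ / 2 := add_le_add (by rwa [dist_comm]) hxw
      _ = δ := by ring
  have hu : (x - p) ∈ proxNormalCone C p :=
    ⟨1, zero_le_one, x, ⟨hpC, hpd⟩, (one_smul _ _).symm⟩
  have hreg' := hreg p ⟨hpC, hpw⟩ xb hxb (x - p) hu
  have hid : ‖x - xb‖ ^ 2 = ‖x - p‖ ^ 2 + 2 * ⟪x - p, p - xb⟫ + ‖p - xb‖ ^ 2 := by
    have h : x - xb = (x - p) + (p - xb) := by abel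
    rw [h, norm_add_sq_real]
  have h1ε : 0 < 1 - ε := by linarith
  rw [one_div, inv_mul_eq_div, le_div_iff₀ h1ε]
  nlinarith [sq_nonneg (‖x - p‖ - ‖p - xb‖), mul_nonneg (mul_nonneg hε0 (norm_nonneg (x - p))) (norm_nonneg (p - xb))]
end

section
/- Let C be a nonempty closed subset of a Euclidean space X, w ∈ C, ε ∈ [0, 1/3], δ > 0, λ ∈ (0, 2], and suppose C is (ε, δ)-regular at w. Then for every x ∈ B(w, δ/2), P_C^λ x ⊆ B(w, δ/√2). -/
open Metric Set RealInnerProductSpace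

/-- The relaxed projector `P_C^λ := (1-λ)Id + λ P_C`, as a set-valued map. -/
noncomputable def relaxProj {X : Type*} [NormedAddCommGroup X] [Module ℝ X]
    (C : Set X) (l : ℝ) (x : X) : Set X :=
  {y | ∃ p ∈ projSet C x, y = (1 - l) • x + l • p}

/-- Key scalar inequality: if `s ≥ 0`, `0 ≤ t ≤ r`, `ε ∈ [0,1/3]` and
`s² ≤ r² - t² + 2εts`, then `4εts ≤ r²`. -/
lemma key_ineq (ε t s r : ℝ) (hε0 : 0 ≤ ε) (hε1 : ε ≤ 1/3) (ht0 : 0 ≤ t)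
    (hs0 : 0 ≤ s) (htr : t ≤ r) (hs2 : s^2 ≤ r^2 - t^2 + 2*ε*t*s) :
    4*ε*t*s ≤ r^2 := by
  have h19 : ε^2 ≤ 1/9 := by nlinarith
  have ht2 : t^2 ≤ r^2 := by nlinarith
  by_cases h : s ≤ ε*t
  · nlinarith [mul_le_mul_of_nonneg_left h (show (0:ℝ) ≤ 4*ε*t by positivity),
      mul_nonneg (show (0:ℝ) ≤ 1/9 - ε^2 by linarith) (sq_nonneg t)]
  · push_neg at h
    have hA : 0 ≤ 4*ε*t*(s - ε*t) :=
      mul_nonneg (by positivity) (by linarith)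
    have hB : 0 ≤ r^2 - 4*ε^2*t^2 := by
      nlinarith [mul_nonneg (show (0:ℝ) ≤ 1/9 - ε^2 by linarith) (sq_nonneg t)]
    have hsq : (4*ε*t*(s - ε*t))^2 ≤ (r^2 - 4*ε^2*t^2)^2 := by
      nlinarith [mul_le_mul_of_nonneg_left hs2 (show (0:ℝ) ≤ 16*ε^2*t^2 by positivity),
        mul_nonneg (show (0:ℝ) ≤ 1/9 - ε^2 by linarith)
          (mul_nonneg (sq_nonneg t) (show (0:ℝ) ≤ 3*r^2 - 2*t^2 by nlinarith [sq_nonneg r])),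
        sq_nonneg (3*r^2 - 4*t^2)]
    have hAB : 4*ε*t*(s - ε*t) ≤ r^2 - 4*ε^2*t^2 :=
      (pow_le_pow_iff_left₀ hA hB two_ne_zero).mp hsq
    nlinarith [hAB]

/-- for `ε ∈ [0,1/3]` and `λ ∈ (0,2]`, the relaxed projector maps
`B(w, δ/2)` into `B(w, δ/√2)`. -/
theorem relaxProj_maps_into_ball_of_regular
    {X : Type*} [NormedAddCommGroup X] [InnerProductSpace ℝ X] [FiniteDimensional ℝ X]
    (C : Set X) (hCne : C.Nonempty) (hCcl : IsClosed C)
    (w : X) (hw : w ∈ C) (ε δ l : ℝ) (hε0 : 0 ≤ ε) (hε1 : ε ≤ 1 / 3) (hδ : 0 < δ)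
    (hl0 : 0 < l) (hl2 : l ≤ 2) (hreg : EpsDeltaRegular C w ε δ) :
    ∀ x ∈ closedBall w (δ / 2), relaxProj C l x ⊆ closedBall w (δ / Real.sqrt 2) := by
  intro x hx y hy
  obtain ⟨p, hp, rfl⟩ := hy
  obtain ⟨hpC, hpd⟩ := hp
  set t := ‖x - p‖ with htdef
  set s := ‖p - w‖ with hsdef
  set r := ‖x - w‖ with hrdef
  set a := ⟪x - p, p - w⟫ with hadef
  have hr : r ≤ δ / 2 := by
    rw [hrdef, ← dist_eq_norm]; exact mem_closedBall.mp hx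
  have htr : t ≤ r := by
    rw [htdef, ← dist_eq_norm, hpd, hrdef, ← dist_eq_norm]
    exact Metric.infDist_le_dist_of_mem hw
  have ht0 : 0 ≤ t := norm_nonneg _
  have hs0 : 0 ≤ s := norm_nonneg _
  have hr0 : 0 ≤ r := norm_nonneg _
  have hsδ : s ≤ δ := by
    have h1 : s ≤ ‖p - x‖ + ‖x - w‖ := norm_sub_le_norm_sub_add_norm_sub p x w
    rw [norm_sub_rev p x, ← htdef, ← hrdef] at h1
    linarith
  have hpmem : p ∈ C ∩ closedBall w δ := ⟨hpC, by rwa [mem_closedBall, dist_eq_norm]⟩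
  have hwmem : w ∈ C ∩ closedBall w δ := ⟨hw, mem_closedBall_self hδ.le⟩
  have hucone : x - p ∈ proxNormalCone C p :=
    ⟨1, zero_le_one, x, ⟨hpC, hpd⟩, (one_smul ℝ _).symm⟩
  have ha : a ≥ -ε * (t * s) := hreg p hpmem w hwmem (x - p) hucone
  have hxw : x - w = (x - p) + (p - w) := by abel
  have hr2 : r^2 = t^2 + 2*a + s^2 := by
    rw [hrdef, hxw, @norm_add_sq_real]
  have hyw : ((1 - l) • x + l • p) - w = (1 - l) • (x - p) + (p - w) := by
    rw [smul_sub, sub_smul]; module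
  have hy2 : ‖((1 - l) • x + l • p) - w‖^2 = (1-l)^2*t^2 + 2*(1-l)*a + s^2 := by
    rw [hyw, @norm_add_sq_real, real_inner_smul_left, norm_smul, Real.norm_eq_abs,
      mul_pow, sq_abs, ← htdef, ← hsdef, ← hadef]
    ring
  have hs2 : s^2 ≤ r^2 - t^2 + 2*ε*t*s := by nlinarith [ha, hr2]
  have hkey : 4*ε*t*s ≤ r^2 := key_ineq ε t s r hε0 hε1 ht0 hs0 htr hs2
  have hfinal : ‖((1 - l) • x + l • p) - w‖^2 ≤ (δ / Real.sqrt 2)^2 := by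
    have hδ2 : (δ / Real.sqrt 2)^2 = δ^2/2 := by
      rw [div_pow, Real.sq_sqrt (by norm_num : (0:ℝ) ≤ 2)]
    rw [hy2, hδ2]
    have h1 : 0 ≤ l*(2-l)*t^2 := by
      apply mul_nonneg (mul_nonneg hl0.le (by linarith)) (sq_nonneg t)
    have h2 : 0 ≤ l*(a + ε*(t*s)) := mul_nonneg hl0.le (by linarith)
    have h3 : 0 ≤ (2-l)*(ε*(t*s)) :=
      mul_nonneg (by linarith) (mul_nonneg hε0 (mul_nonneg ht0 hs0))
    have h4 : r*r ≤ (δ/2)*(δ/2) := mul_self_le_mul_self hr0 hr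
    nlinarith [hr2, hkey, h1, h2, h3, h4]
  rw [mem_closedBall, dist_eq_norm]
  have hrhs : 0 ≤ δ / Real.sqrt 2 := by positivity
  exact (pow_le_pow_iff_left₀ (norm_nonneg _) hrhs two_ne_zero).mp hfinal
end

section
/- Let C = c + K where K is an obtuse closed convex cone in a Euclidean space X (i.e., -K° ⊆ K, where K° is the polar cone of K). Then for every λ ≥ 1 and every x ∈ X, the relaxed projection P_C^λ x = (1-λ)x + λ P_C x lies in C. -/
open Metric Set RealInnerProductSpace

/-- over-relaxed projections onto a translation of an obtuse closed
convex cone land in the set. -/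
theorem relaxProj_mem_of_obtuse_cone
    {X : Type*} [NormedAddCommGroup X] [InnerProductSpace ℝ X] [FiniteDimensional ℝ X]
    (K : Set X) (hKne : K.Nonempty) (hKcl : IsClosed K) (hKconv : Convex ℝ K)
    (hKcone : ∀ x ∈ K, ∀ c : ℝ, 0 ≤ c → c • x ∈ K)
    (hobtuse : ∀ y : X, (∀ x ∈ K, ⟪x, y⟫ ≤ 0) → -y ∈ K)
    (c : X) (C : Set X) (hC : C = (fun k => c + k) '' K)
    (l : ℝ) (hl : 1 ≤ l) (x : X) :
    ∀ p ∈ projSet C x, (1 - l) • x + l • p ∈ C := by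
  -- sum of two elements of K is in K
  have hadd : ∀ a ∈ K, ∀ b ∈ K, a + b ∈ K := by
    intro a ha b hb
    have h2 : ((1:ℝ)/2) • a + ((1:ℝ)/2) • b ∈ K :=
      hKconv ha hb (by norm_num) (by norm_num) (by norm_num)
    have := hKcone _ h2 2 (by norm_num)
    simpa [smul_smul, smul_add] using this
  intro p hp
  obtain ⟨hpC, hpd⟩ := hp
  have hCconv : Convex ℝ C := by
    rw [hC]; simpa using hKconv.translate c
  have key : ∀ w ∈ C, ⟪x - p, w - p⟫ ≤ 0 := by
    rw [← norm_eq_iInf_iff_real_inner_le_zero hCconv hpC]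
    rw [Metric.infDist_eq_iInf] at hpd
    simpa [dist_eq_norm] using hpd
  rw [hC] at hpC
  obtain ⟨q, hqK, rfl⟩ := hpC
  have hK0 : (0:X) ∈ K := by
    obtain ⟨a, ha⟩ := hKne
    simpa using hKcone a ha 0 le_rfl
  have hkey' : ∀ k ∈ K, ⟪x - (c + q), k - q⟫ ≤ 0 := by
    intro k hk
    have := key (c + k) (hC ▸ ⟨k, hk, rfl⟩)
    simpa [add_sub_add_left_eq_sub] using this
  have hq0 : ⟪x - (c + q), q⟫ = 0 := by
    have h1 := hkey' 0 hK0
    have h2 := hkey' (2 • q) (hKcone q hqK 2 (by norm_num))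
    rw [inner_sub_right] at h1 h2
    simp only [inner_zero_right, inner_smul_right] at h1 h2
    linarith
  have hneg : ∀ k ∈ K, ⟪k, x - (c + q)⟫ ≤ 0 := by
    intro k hk
    have := hkey' k hk
    rw [inner_sub_right, hq0] at this
    rw [real_inner_comm]; linarith
  have hvK : -(x - (c + q)) ∈ K := hobtuse _ hneg
  have hsum : q + (l - 1) • (-(x - (c + q))) ∈ K :=
    hadd q hqK _ (hKcone _ hvK (l - 1) (by linarith))
  rw [hC]
  refine ⟨q + (l - 1) • (-(x - (c + q))), hsum, ?_⟩
  have : (1 - l) • x + l • (c + q) = c + (q + (l - 1) • (-(x - (c + q)))) := by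
    simp only [smul_neg, smul_sub, smul_add, sub_smul, one_smul]
    abel
  rw [this]
end

section
/- Let D be a nonempty closed subset of a Euclidean space X and τ ≥ 0. Then the τ-enlargement C := D + B(0, τ) = {x : d_D(x) ≤ τ} is 2τ-injectable on X: for every x ∈ X and every p ∈ P_C x, the segment [p, p + 2τ(p - x)/‖p - x‖] is contained in C (where the direction vector is taken to be 0 if p = x). -/
open Metric Set Pointwise
open scoped Classical

/-- every `τ`-enlargement `D + B(0, τ)` is `2τ`-injectable on `X`. -/
theorem enlargement_injectable
    {X : Type*} [NormedAddCommGroup X] [InnerProductSpace ℝ X] [FiniteDimensional ℝ X]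
    (D : Set X) (hDne : D.Nonempty) (hDcl : IsClosed D) (τ : ℝ) (hτ : 0 ≤ τ) :
    ∀ x : X, ∀ p ∈ projSet (D + closedBall 0 τ) x,
      segment ℝ p
        (p + (2 * τ) • (if p = x then (0 : X) else ‖p - x‖⁻¹ • (p - x)))
        ⊆ D + closedBall 0 τ := by
  intro x p hp
  obtain ⟨hpC, hpd⟩ := hp
  by_cases hpx : p = x
  · simp only [if_pos hpx, smul_zero, add_zero, segment_same]
    exact singleton_subset_iff.2 hpC
  rcases eq_or_lt_of_le hτ with hτ0 | hτ0
  · subst hτ0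
    simp only [mul_zero, zero_smul, add_zero, segment_same]
    exact singleton_subset_iff.2 hpC
  rw [if_neg hpx]
  set C := D + closedBall (0 : X) τ with hC
  -- x ∉ C
  have hxC : x ∉ C := by
    intro hx
    have h0 : dist x p = 0 := by rw [hpd, infDist_zero_of_mem hx]
    exact hpx (dist_eq_zero.mp h0).symm
  -- every point of D is at distance > τ from x
  have hfar : ∀ e ∈ D, τ < dist x e := by
    intro e he
    by_contra h
    push_neg at h
    exact hxC ⟨e, he, x - e, by simpa [mem_closedBall, dist_eq_norm] using h, by show e + (x - e) = x; abel⟩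
  -- infDist p D ≤ τ
  obtain ⟨d0, hd0, b, hb, hdb⟩ := hpC
  have hpDτ : infDist p D ≤ τ := by
    calc infDist p D ≤ dist p d0 := infDist_le_dist_of_mem hd0
      _ ≤ τ := by
        have hbn : ‖b‖ ≤ τ := by simpa [mem_closedBall, dist_eq_norm] using hb
        have : p - d0 = b := by rw [← hdb]; show d0 + b - d0 = b; abel
        rwa [dist_eq_norm, this]
  -- nearest point d of D to p
  obtain ⟨d, hdD, hdd⟩ := hDcl.exists_infDist_eq_dist hDne p
  have hpdτ : dist p d ≤ τ := hdd ▸ hpDτ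
  -- infDist x C ≤ infDist x D - τ, via nearest point d' of D to x
  obtain ⟨d', hd'D, hdd'⟩ := hDcl.exists_infDist_eq_dist hDne x
  have hr : τ < ‖x - d'‖ := by simpa [dist_eq_norm] using hfar d' hd'D
  have hrpos : (0 : ℝ) < ‖x - d'‖ := lt_of_le_of_lt hτ hr
  have hxCle : infDist x C ≤ dist x d' - τ := by
    set c : X := d' + (τ / ‖x - d'‖) • (x - d') with hc
    have hcC : c ∈ C := by
      refine ⟨d', hd'D, (τ / ‖x - d'‖) • (x - d'), ?_, rfl⟩
      have : ‖(τ / ‖x - d'‖) • (x - d')‖ = τ := by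
        rw [norm_smul, Real.norm_eq_abs, abs_of_nonneg (by positivity),
          div_mul_cancel₀ _ (ne_of_gt hrpos)]
      simp [mem_closedBall, dist_eq_norm, this]
    have hdxc : dist x c = ‖x - d'‖ - τ := by
      have h1 : x - c = (1 - τ / ‖x - d'‖) • (x - d') := by
        rw [hc]; rw [sub_smul, one_smul]; abel
      rw [dist_eq_norm, h1, norm_smul, Real.norm_eq_abs,
        abs_of_nonneg (by rw [sub_nonneg]; exact (div_le_one hrpos).2 hr.le),
        sub_mul, one_mul, div_mul_cancel₀ _ (ne_of_gt hrpos)]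
    calc infDist x C ≤ dist x c := infDist_le_dist_of_mem hcC
      _ = ‖x - d'‖ - τ := hdxc
      _ = dist x d' - τ := by rw [dist_eq_norm]
  -- equality chain
  have hchain : dist x d' ≤ dist x p + τ := by
    calc dist x d' ≤ dist x d := by
          rw [← hdd']; exact infDist_le_dist_of_mem (by
            exact hdD) |>.trans_eq rfl |>.trans (le_refl _) |>.trans (le_of_eq rfl)
      _ ≤ dist x p + dist p d := dist_triangle x p d
      _ ≤ dist x p + τ := by linarith
  have hge : dist x p + τ ≤ dist x d' := by
    have := hpd ▸ hxCle
    linarith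
  have heq : dist x d' = dist x p + τ := le_antisymm hchain hge
  -- hence dist x d = dist x p + dist p d and dist p d = τ
  have hxd_le : dist x d' ≤ dist x d := by
    rw [← hdd']; exact infDist_le_dist_of_mem hdD
  have htri : dist x d ≤ dist x p + dist p d := dist_triangle x p d
  have hpd_eq : dist p d = τ := by
    have : dist x p + τ ≤ dist x p + dist p d := heq ▸ hxd_le.trans' (le_of_eq rfl) |>.trans htri
    linarith
  have hsum : ‖(p - x) + (d - p)‖ = ‖p - x‖ + ‖d - p‖ := by
    have h1 : (p - x) + (d - p) = d - x := by abel
    have h2 : ‖d - x‖ = ‖x - d‖ := norm_sub_rev _ _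
    have hxd : dist x d = dist x p + dist p d := by
      have : dist x p + dist p d ≥ dist x p + τ := by linarith [hpd_eq.ge]
      have h4 : dist x d ≥ dist x p + τ := by
        calc dist x p + τ = dist x d' := heq.symm
          _ ≤ dist x d := hxd_le
      linarith [dist_triangle x p d]
    rw [h1, h2]
    simpa [dist_eq_norm, norm_sub_rev] using hxd
  have hdp_ne : d - p ≠ 0 := by
    intro h
    have : dist p d = 0 := by rw [dist_eq_norm, ← norm_neg, neg_sub, h, norm_zero]
    rw [hpd_eq] at this; linarith
  have hpx_ne : p - x ≠ 0 := sub_ne_zero.2 hpx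
  have hray : SameRay ℝ (p - x) (d - p) := sameRay_iff_norm_add.mpr hsum
  have hu : ‖p - x‖⁻¹ • (p - x) = ‖d - p‖⁻¹ • (d - p) := by
    rcases sameRay_iff_inv_norm_smul_eq.mp hray with h | h | h
    · exact absurd h hpx_ne
    · exact absurd h hdp_ne
    · exact h
  set u : X := ‖p - x‖⁻¹ • (p - x) with hudef
  have hun : ‖u‖ = 1 := by
    rw [hudef, norm_smul, norm_inv, norm_norm, inv_mul_cancel₀ (norm_ne_zero_iff.2 hpx_ne)]
  have hd_eq : d = p + τ • u := by
    have : d - p = ‖d - p‖ • (‖d - p‖⁻¹ • (d - p)) := by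
      rw [smul_smul, mul_inv_cancel₀ (norm_ne_zero_iff.2 hdp_ne), one_smul]
    have hτn : ‖d - p‖ = τ := by
      rw [← hpd_eq, dist_eq_norm, norm_sub_rev]
    rw [← hu] at this
    rw [hτn] at this
    rw [← this]; abel
  -- conclude
  intro q hq
  rw [segment_eq_image'] at hq
  obtain ⟨t, ht, hqt⟩ := hq
  have hqd : q - d = (2 * τ * t - τ) • u := by
    have h1 : q = p + t • ((2 * τ) • u) := by
      rw [← hqt]; show p + t • (p + (2 * τ) • u - p) = p + t • (2 * τ) • u
      rw [add_sub_cancel_left]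
    rw [h1, hd_eq, smul_smul]
    have : p + (t * (2 * τ)) • u - (p + τ • u) = (t * (2 * τ) - τ) • u := by
      rw [sub_smul]; abel
    rw [this]; ring_nf
  have hqdn : ‖q - d‖ ≤ τ := by
    rw [hqd, norm_smul, hun, mul_one, Real.norm_eq_abs, abs_le]
    obtain ⟨ht0, ht1⟩ := ht
    constructor <;> nlinarith
  exact ⟨d, hdD, q - d, by simpa [mem_closedBall, dist_eq_norm] using hqdn, by show d + (q - d) = q; abel⟩
end

section
/- Let C be a nonempty closed subset of a Euclidean space X, w ∈ C, and suppose C is τ-injectable on B(w, δ) for some τ > 0 and δ > 0. Set δ' := min{τ, δ}. Then for every λ ∈ [1, 2] and every x ∈ B(w, δ'), the relaxed projection P_C^λ x is contained in C. -/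
open Metric Set
open scoped Classical

/-- `C` is `τ`-injectable on `U`. -/
noncomputable def Injectable {X : Type*} [NormedAddCommGroup X] [InnerProductSpace ℝ X]
    (C : Set X) (τ : ℝ) (U : Set X) : Prop :=
  ∀ x ∈ U, ∀ p ∈ projSet C x,
    segment ℝ p (p + τ • (if p = x then (0 : X) else ‖p - x‖⁻¹ • (p - x))) ⊆ C

/-- relaxed projections with `λ ∈ [1,2]` onto a strictly injectable
set land inside the set near `w`. -/
theorem relaxProj_subset_of_injectable
    {X : Type*} [NormedAddCommGroup X] [InnerProductSpace ℝ X] [FiniteDimensional ℝ X]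
    (C : Set X) (hCne : C.Nonempty) (hCcl : IsClosed C)
    (w : X) (hw : w ∈ C) (τ δ : ℝ) (hτ : 0 < τ) (hδ : 0 < δ)
    (hinj : Injectable C τ (closedBall w δ)) (l : ℝ) (hl1 : 1 ≤ l) (hl2 : l ≤ 2) :
    ∀ x ∈ closedBall w (min τ δ), relaxProj C l x ⊆ C := by
  intro x hx y hy
  obtain ⟨p, hp, rfl⟩ := hy
  have hxδ : x ∈ closedBall w δ :=
    closedBall_subset_closedBall (min_le_right τ δ) hx
  by_cases hpx : p = x
  · subst hpx
    have h : (1 - l) • p + l • p = p := by module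
    rw [h]; exact hp.1
  · have hpos : 0 < ‖p - x‖ := by
      rw [norm_pos_iff]; exact sub_ne_zero.mpr hpx
    have hτle : ‖p - x‖ ≤ τ := by
      have h1 : dist x p ≤ dist x w := hp.2 ▸ infDist_le_dist_of_mem hw
      have h2 : dist x w ≤ min τ δ := mem_closedBall.mp hx
      calc ‖p - x‖ = dist x p := by rw [dist_eq_norm, norm_sub_rev]
        _ ≤ min τ δ := h1.trans h2
        _ ≤ τ := min_le_left _ _
    apply hinj x hxδ p hp
    rw [if_neg hpx, segment_eq_image']
    refine ⟨(l - 1) * ‖p - x‖ / τ, ⟨?_, ?_⟩, ?_⟩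
    · have hl : 0 ≤ l - 1 := by linarith
      positivity
    · rw [div_le_one hτ]
      calc (l - 1) * ‖p - x‖ ≤ 1 * τ := by
            apply mul_le_mul (by linarith) hτle hpos.le one_pos.le
        _ = τ := one_mul τ
    · have hsmul : ((l - 1) * ‖p - x‖ / τ) • (τ • (‖p - x‖⁻¹ • (p - x)))
          = (l - 1) • (p - x) := by
        rw [smul_smul, smul_smul]
        congr 1
        field_simp
      simp only [add_sub_cancel_left]
      rw [hsmul]
      module
end

section
/- Let x, p, q be points in a Euclidean space with ‖p - q‖ = τ > 0 and suppose p lies on the segment [x, q] with p ≠ x. Then p + 2τ(p - x)/‖p - x‖ = 2q - p, and the segment [p, 2q - p] is contained in q + B(0, τ). -/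
open Metric Set

/-- geometric core of injectability of enlargements. -/
theorem injection_segment_in_ball
    {X : Type*} [NormedAddCommGroup X] [InnerProductSpace ℝ X] [FiniteDimensional ℝ X]
    (x p q : X) (τ : ℝ) (hτ : 0 < τ) (hpq : ‖p - q‖ = τ)
    (hseg : p ∈ segment ℝ x q) (hpx : p ≠ x) :
    p + ((2 * τ) * ‖p - x‖⁻¹) • (p - x) = (2 : ℝ) • q - p ∧
    segment ℝ p ((2 : ℝ) • q - p) ⊆ closedBall q τ := by
  obtain ⟨a, b, ha, hb, hab, hp⟩ := hseg
  -- p - x = b • (q - x), q - p = a • (q - x)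
  have hpx' : p - x = b • (q - x) := by
    rw [← hp]; rw [show a = 1 - b by linarith]; module
  have hqp : q - p = a • (q - x) := by
    rw [← hp]; rw [show a = 1 - b by linarith]; module
  have hb0 : b ≠ 0 := by
    rintro rfl
    apply hpx
    rw [← sub_eq_zero, hpx', zero_smul]
  have ha0 : a ≠ 0 := by
    rintro rfl
    rw [← neg_sub, hqp, zero_smul, neg_zero, norm_zero] at hpq
    exact hτ.ne hpq
  have hnqx : ‖q - x‖ ≠ 0 := by
    intro h
    rw [← neg_sub, hqp, norm_neg, norm_smul, h, mul_zero] at hpq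
    exact hτ.ne hpq
  have hnpq : ‖p - q‖ = a * ‖q - x‖ := by
    rw [← neg_sub, hqp, norm_neg, norm_smul, Real.norm_eq_abs, abs_of_nonneg ha]
  have hnpx : ‖p - x‖ = b * ‖q - x‖ := by
    rw [hpx', norm_smul, Real.norm_eq_abs, abs_of_nonneg hb]
  have hfirst : p + ((2 * τ) * ‖p - x‖⁻¹) • (p - x) = (2 : ℝ) • q - p := by
    have : ((2 * τ) * ‖p - x‖⁻¹) • (p - x) = (2 : ℝ) • (q - p) := by
      rw [hnpx, hpx', hqp, smul_smul, smul_smul, ← hpq, hnpq]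
      congr 1
      field_simp
    rw [this]; module
  refine ⟨hfirst, ?_⟩
  rintro y ⟨s, t, hs, ht, hst, rfl⟩
  rw [mem_closedBall, dist_eq_norm]
  have : s • p + t • ((2:ℝ) • q - p) - q = (s - t) • (p - q) := by
    rw [show s = 1 - t by linarith]; module
  rw [this, norm_smul, Real.norm_eq_abs, hpq]
  have : |s - t| ≤ 1 := by rw [abs_le]; constructor <;> linarith
  nlinarith
end

section
/- Let C be a closed subset of a Euclidean space X, w ∈ C, and let (x_n) be a sequence in X. Suppose there exist δ > 0, ρ ∈ [0,1), σ > 0 such that whenever x_n ∈ B(w, δ) one has d_C(x_{n+1}) ≤ ρ d_C(x_n) and ‖x_{n+1} - x_n‖ ≤ σ d_C(x_n). If x_0 ∈ B(w, δ(1-ρ)/(σ + 1 - ρ)), then x_n ∈ B(w, δ) for all n, and consequently (x_n) converges R-linearly to a point of C ∩ B(w, δ) with rate ρ. -/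
/-!
While the iterates stay in `B(w, δ)`, the quantity `‖x n - x 0‖ + σ / (1 - ρ) · d_C (x n)` does
not increase: a step moves at most `σ d_C (x n)` and the second term drops by at least that much.
Hence every iterate lies within `σ / (1 - ρ) · d_C (x 0) ≤ σ / (1 - ρ) · ‖x 0 - w‖` of `x 0`, and the
choice of radius for `x 0` makes this land inside `B(w, δ)`. The decrease conditions then hold for all
`n`, so `d_C (x n) ≤ ρ ^ n d_C (x 0)`, the steps are geometrically summable, and the limit lies in `C`.
-/

open Metric Set Filter Topology

section InfDistContraction

variable {α : Type*} {C : Set α} {x : ℕ → α} {ρ σ : ℝ}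

theorem exists_tendsto_mem_closure_of_infDist_le_mul [MetricSpace α] [CompleteSpace α]
    (hC : C.Nonempty) (hρ0 : 0 ≤ ρ) (hρ1 : ρ < 1) (hσ : 0 ≤ σ)
    (hdecr : ∀ n, infDist (x (n + 1)) C ≤ ρ * infDist (x n) C)
    (hstep : ∀ n, dist (x (n + 1)) (x n) ≤ σ * infDist (x n) C) :
    ∃ xb ∈ closure C, Tendsto x atTop (𝓝 xb) ∧
      ∀ n, dist (x n) xb ≤ σ * infDist (x 0) C / (1 - ρ) * ρ ^ n := by
  have hinf : ∀ n, infDist (x n) C ≤ ρ ^ n * infDist (x 0) C := fun n ↦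
    le_geom (u := fun n ↦ infDist (x n) C) hρ0 n fun k _ ↦ hdecr k
  have hgeom : ∀ n, dist (x n) (x (n + 1)) ≤ σ * infDist (x 0) C * ρ ^ n := fun n ↦
    calc dist (x n) (x (n + 1)) ≤ σ * infDist (x n) C := dist_comm (x n) _ ▸ hstep n
      _ ≤ σ * (ρ ^ n * infDist (x 0) C) := mul_le_mul_of_nonneg_left (hinf n) hσ
      _ = σ * infDist (x 0) C * ρ ^ n := by ring
  obtain ⟨xb, hxb⟩ := cauchySeq_tendsto_of_complete (cauchySeq_of_le_geometric ρ _ hρ1 hgeom)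
  have hinf_zero : Tendsto (fun n ↦ infDist (x n) C) atTop (𝓝 0) :=
    squeeze_zero (fun _ ↦ infDist_nonneg) hinf <| by
      simpa using (tendsto_pow_atTop_nhds_zero_of_lt_one hρ0 hρ1).mul_const (infDist (x 0) C)
  have hxb_inf : infDist xb C = 0 :=
    tendsto_nhds_unique (((continuous_infDist_pt C).tendsto xb).comp hxb) hinf_zero
  refine ⟨xb, (mem_closure_iff_infDist_zero hC).2 hxb_inf, hxb, fun n ↦ ?_⟩
  exact (dist_le_of_le_geometric_of_tendsto ρ _ hρ1 hgeom hxb n).trans_eq (by ring)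

variable [PseudoMetricSpace α]

theorem dist_add_div_mul_infDist_le_of_step (hρ1 : ρ < 1) (hσ : 0 ≤ σ) {y y' : α} (z : α)
    (hdecr : infDist y' C ≤ ρ * infDist y C) (hstep : dist y' y ≤ σ * infDist y C) :
    dist y' z + σ / (1 - ρ) * infDist y' C ≤ dist y z + σ / (1 - ρ) * infDist y C := by
  have h1ρ : 0 < 1 - ρ := sub_pos.2 hρ1
  calc dist y' z + σ / (1 - ρ) * infDist y' C
      ≤ (dist y' y + dist y z) + σ / (1 - ρ) * (ρ * infDist y C) :=
        add_le_add (dist_triangle _ _ _)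
          (mul_le_mul_of_nonneg_left hdecr (div_nonneg hσ h1ρ.le))
    _ ≤ (σ * infDist y C + dist y z) + σ / (1 - ρ) * (ρ * infDist y C) := by gcongr
    _ = dist y z + σ / (1 - ρ) * infDist y C := by field_simp; ring

theorem forall_mem_closedBall_of_local_step {w : α} {δ : ℝ} (hw : w ∈ C) (hρ1 : ρ < 1)
    (hσ : 0 ≤ σ)
    (hstep : ∀ n, x n ∈ closedBall w δ →
      infDist (x (n + 1)) C ≤ ρ * infDist (x n) C ∧ dist (x (n + 1)) (x n) ≤ σ * infDist (x n) C)
    (hx0 : x 0 ∈ closedBall w (δ * (1 - ρ) / (σ + 1 - ρ))) :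
    ∀ n, x n ∈ closedBall w δ := by
  have h1ρ : 0 < 1 - ρ := sub_pos.2 hρ1
  set K := σ / (1 - ρ)
  have hK : 0 ≤ K := div_nonneg hσ h1ρ.le
  have hx0w : dist (x 0) w ≤ δ * (1 - ρ) / (σ + 1 - ρ) := hx0
  have hradius : K * (δ * (1 - ρ) / (σ + 1 - ρ)) + δ * (1 - ρ) / (σ + 1 - ρ) = δ := by
    have : σ + 1 - ρ ≠ 0 := by linarith
    simp only [K]; field_simp; ring
  have hnear : ∀ y, dist y (x 0) ≤ K * infDist (x 0) C → y ∈ closedBall w δ := fun y hy ↦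
    calc dist y w ≤ dist y (x 0) + dist (x 0) w := dist_triangle _ _ _
      _ ≤ K * dist (x 0) w + dist (x 0) w := by
        gcongr; exact hy.trans (by gcongr; exact infDist_le_dist_of_mem hw)
      _ ≤ δ := by rw [← hradius]; gcongr
  have hlyap : ∀ n, dist (x n) (x 0) + K * infDist (x n) C ≤ K * infDist (x 0) C := by
    intro n
    induction n with
    | zero => simp
    | succ n ih =>
      have hxn := hnear (x n) (by linarith [mul_nonneg hK (infDist_nonneg (x := x n) (s := C))])
      obtain ⟨hdecr, hmove⟩ := hstep n hxn
      exact (dist_add_div_mul_infDist_le_of_step hρ1 hσ _ hdecr hmove).trans ih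
  exact fun n ↦ hnear (x n) (by linarith [hlyap n, mul_nonneg hK (infDist_nonneg (x := x n) (s := C))])

end InfDistContraction

theorem rlinear_convergence_local_general
    {X : Type*} [NormedAddCommGroup X] [InnerProductSpace ℝ X] [FiniteDimensional ℝ X]
    (C : Set X) (hCcl : IsClosed C)
    (w : X) (hw : w ∈ C) (δ ρ σ : ℝ) (hρ0 : 0 ≤ ρ) (hρ1 : ρ < 1)
    (hσ : 0 < σ) (x : ℕ → X)
    (hstep : ∀ n, x n ∈ closedBall w δ →
      Metric.infDist (x (n + 1)) C ≤ ρ * Metric.infDist (x n) C ∧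
      ‖x (n + 1) - x n‖ ≤ σ * Metric.infDist (x n) C)
    (hx0 : x 0 ∈ closedBall w (δ * (1 - ρ) / (σ + 1 - ρ))) :
    (∀ n, x n ∈ closedBall w δ) ∧
    ∃ xb ∈ C ∩ closedBall w δ,
      Tendsto x atTop (nhds xb) ∧
      ∃ σ' : ℝ, 0 ≤ σ' ∧ ∀ n, ‖x n - xb‖ ≤ σ' * ρ ^ n := by
  simp only [← dist_eq_norm] at hstep ⊢
  have hball := forall_mem_closedBall_of_local_step hw hρ1 hσ.le hstep hx0
  have : CompleteSpace X := FiniteDimensional.complete ℝ X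
  obtain ⟨xb, hxbC, hxb, hrate⟩ := exists_tendsto_mem_closure_of_infDist_le_mul ⟨w, hw⟩ hρ0 hρ1
    hσ.le (fun n ↦ (hstep n (hball n)).1) (fun n ↦ (hstep n (hball n)).2)
  refine ⟨hball, xb, ⟨hCcl.closure_eq ▸ hxbC,
    isClosed_closedBall.mem_of_tendsto hxb (.of_forall hball)⟩, hxb, _, ?_, hrate⟩
  exact div_nonneg (mul_nonneg hσ.le infDist_nonneg) (sub_nonneg.2 hρ1.le)

/-- if the decrease conditions hold whenever the iterate lies in
`B(w, δ)` and the starting point is close enough to `w`, then the whole sequence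
stays in `B(w, δ)` and converges R-linearly to a point of `C ∩ B(w, δ)`. -/
theorem rlinear_convergence_local
    {X : Type*} [NormedAddCommGroup X] [InnerProductSpace ℝ X] [FiniteDimensional ℝ X]
    (C : Set X) (hCcl : IsClosed C) (hCne : C.Nonempty)
    (w : X) (hw : w ∈ C) (δ ρ σ : ℝ) (hδ : 0 < δ) (hρ0 : 0 ≤ ρ) (hρ1 : ρ < 1)
    (hσ : 0 < σ) (x : ℕ → X)
    (hstep : ∀ n, x n ∈ closedBall w δ →
      Metric.infDist (x (n + 1)) C ≤ ρ * Metric.infDist (x n) C ∧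
      ‖x (n + 1) - x n‖ ≤ σ * Metric.infDist (x n) C)
    (hx0 : x 0 ∈ closedBall w (δ * (1 - ρ) / (σ + 1 - ρ))) :
    (∀ n, x n ∈ closedBall w δ) ∧
    ∃ xb ∈ C ∩ closedBall w δ,
      Tendsto x atTop (nhds xb) ∧
      ∃ σ' : ℝ, 0 ≤ σ' ∧ ∀ n, ‖x n - xb‖ ≤ σ' * ρ ^ n :=
  rlinear_convergence_local_general C hCcl w hw δ ρ σ hρ0 hρ1 hσ x hstep hx0
end

section
/- Let T : X ⇉ X, C a closed subset of a Euclidean space X, w ∈ C, and suppose there exist δ > 0 and ρ ∈ [0,1) such that for all x ∈ B(w, δ), all x₊ ∈ Tx, and all p ∈ P_C x: ‖x₊ - p‖ ≤ ρ‖x - p‖. Let (x_n) be generated by T (x_{n+1} ∈ Tx_n). Then whenever x_0 ∈ B(w, δ(1-ρ)/2), there exists x̄ ∈ C ∩ B(w, δ) with ‖x_n - x̄‖ ≤ ((1+ρ)‖x_0 - w‖/(1-ρ)) ρⁿ for all n. -/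
/-!
Each step moves `xₙ` by at most `(1 + ρ) d_C(xₙ)` (go to a nearest point `p` of `C`, then to
`xₙ₊₁`, which is `ρ`-closer to `p`), while `d_C(xₙ₊₁) ≤ ‖xₙ₊₁ - p‖ ≤ ρ d_C(xₙ)`. As long as the
iterates stay in `B(w, δ)`, the distances to `C` therefore decay like `ρⁿ` and the total
displacement from `x₀` is at most `(1 + ρ) d_C(x₀) / (1 - ρ) ≤ (1 + ρ) ‖x₀ - w‖ / (1 - ρ)`; the
starting radius `δ (1 - ρ) / 2` is exactly what keeps the iterates in `B(w, δ)`. The sequence is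
then Cauchy at a geometric rate, and its limit lies in `C` because `d_C(xₙ) → 0`.
-/

open Metric Set

open Filter Topology

section ProjSet

variable {X : Type*} [NormedAddCommGroup X] {C : Set X} {x xp p : X} {ρ : ℝ}

theorem IsClosed.exists_mem_projSet [ProperSpace X] (hC : IsClosed C) (hne : C.Nonempty)
    (x : X) : ∃ p, p ∈ projSet C x :=
  let ⟨p, hpC, hp⟩ := hC.exists_infDist_eq_dist hne x
  ⟨p, hpC, hp.symm⟩

theorem infDist_le_mul_of_mem_projSet (hp : p ∈ projSet C x) (h : ‖xp - p‖ ≤ ρ * ‖x - p‖) :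
    infDist xp C ≤ ρ * infDist x C := by
  rw [← hp.2]
  calc infDist xp C ≤ dist xp p := infDist_le_dist_of_mem hp.1
    _ ≤ ρ * dist x p := by simpa only [dist_eq_norm] using h

theorem dist_le_one_add_mul_infDist_of_mem_projSet (hp : p ∈ projSet C x)
    (h : ‖xp - p‖ ≤ ρ * ‖x - p‖) : dist x xp ≤ (1 + ρ) * infDist x C := by
  rw [← hp.2]
  calc dist x xp ≤ dist x p + dist xp p := dist_triangle_right _ _ _
    _ ≤ dist x p + ρ * dist x p := by simpa only [dist_eq_norm, add_le_add_iff_left] using h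
    _ = (1 + ρ) * dist x p := by ring

end ProjSet

section Orbit

variable {X : Type*} [PseudoMetricSpace X] {C : Set X}

theorem IsClosed.mem_of_tendsto_infDist_zero {ι : Type*} {l : Filter ι} [l.NeBot] {x : ι → X}
    {a : X} (hC : IsClosed C) (hne : C.Nonempty) (hx : Tendsto x l (𝓝 a))
    (h : Tendsto (fun i => infDist (x i) C) l (𝓝 0)) : a ∈ C :=
  (hC.mem_iff_infDist_zero hne).2 <|
    tendsto_nhds_unique (((continuous_infDist_pt C).tendsto a).comp hx) h

theorem mem_closedBall_and_infDist_le_of_step {w : X} {δ ρ : ℝ} {x : ℕ → X}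
    (hρ0 : 0 ≤ ρ) (hρ1 : ρ < 1) (hw : w ∈ C)
    (hstep : ∀ n, x n ∈ closedBall w δ → infDist (x (n + 1)) C ≤ ρ * infDist (x n) C ∧
      dist (x n) (x (n + 1)) ≤ (1 + ρ) * infDist (x n) C)
    (hx0 : x 0 ∈ closedBall w (δ * (1 - ρ) / 2)) (n : ℕ) :
    x n ∈ closedBall w δ ∧ infDist (x n) C ≤ ρ ^ n * infDist (x 0) C := by
  set D₀ := infDist (x 0) C
  have hD₀ : D₀ ≤ dist (x 0) w := infDist_le_dist_of_mem hw
  have hx0' : dist (x 0) w ≤ δ * (1 - ρ) / 2 := hx0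
  have hball : ∀ n, (1 - ρ) * dist (x n) (x 0) ≤ (1 + ρ) * (1 - ρ ^ n) * D₀ →
      x n ∈ closedBall w δ := by
    intro n hn
    have hρn : 0 ≤ ρ ^ n * D₀ := mul_nonneg (pow_nonneg hρ0 n) infDist_nonneg
    have htri : dist (x n) w ≤ dist (x n) (x 0) + dist (x 0) w := dist_triangle _ _ _
    -- `(1 - ρ) d(xₙ, w) ≤ (1 + ρ) D₀ + (1 - ρ) d(x₀, w) ≤ 2 d(x₀, w) ≤ (1 - ρ) δ`
    have : (1 - ρ) * dist (x n) w ≤ (1 - ρ) * δ := by nlinarith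
    exact le_of_mul_le_mul_left this (by linarith)
  -- the second conjunct sums the step bounds `(1 + ρ) ρᵏ D₀`, `k < n`, times `1 - ρ`
  have hinvariant : ∀ n, infDist (x n) C ≤ ρ ^ n * D₀ ∧
      (1 - ρ) * dist (x n) (x 0) ≤ (1 + ρ) * (1 - ρ ^ n) * D₀ := by
    intro n
    induction n with
    | zero => simp [D₀]
    | succ n ih =>
      obtain ⟨hdist, hmove⟩ := hstep n (hball n ih.2)
      have htri : dist (x (n + 1)) (x 0) ≤ dist (x n) (x (n + 1)) + dist (x n) (x 0) :=
        dist_triangle_left _ _ _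
      have hmove' : dist (x n) (x (n + 1)) ≤ (1 + ρ) * (ρ ^ n * D₀) :=
        hmove.trans (by gcongr; exact ih.1)
      constructor
      · calc infDist (x (n + 1)) C ≤ ρ * (ρ ^ n * D₀) := hdist.trans (by gcongr; exact ih.1)
          _ = ρ ^ (n + 1) * D₀ := by ring
      · rw [pow_succ]
        nlinarith [ih.2]
  exact ⟨hball n (hinvariant n).2, (hinvariant n).1⟩

end Orbit

theorem rlinear_convergence_of_contraction_toward_proj_general
    {X : Type*} [NormedAddCommGroup X] [InnerProductSpace ℝ X] [FiniteDimensional ℝ X]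
    (T : X → Set X) (C : Set X) (hCcl : IsClosed C)
    (w : X) (hw : w ∈ C) (δ ρ : ℝ) (hρ0 : 0 ≤ ρ) (hρ1 : ρ < 1)
    (hT : ∀ x ∈ closedBall w δ, ∀ xp ∈ T x, ∀ p ∈ projSet C x,
      ‖xp - p‖ ≤ ρ * ‖x - p‖)
    (x : ℕ → X) (hx : ∀ n, x (n + 1) ∈ T (x n))
    (hx0 : x 0 ∈ closedBall w (δ * (1 - ρ) / 2)) :
    ∃ xb ∈ C ∩ closedBall w δ,
      ∀ n, ‖x n - xb‖ ≤ ((1 + ρ) * ‖x 0 - w‖ / (1 - ρ)) * ρ ^ n := by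
  have hstep : ∀ n, x n ∈ closedBall w δ → infDist (x (n + 1)) C ≤ ρ * infDist (x n) C ∧
      dist (x n) (x (n + 1)) ≤ (1 + ρ) * infDist (x n) C := fun n hn => by
    obtain ⟨p, hp⟩ := hCcl.exists_mem_projSet ⟨w, hw⟩ (x n)
    have hcontr := hT (x n) hn (x (n + 1)) (hx n) p hp
    exact ⟨infDist_le_mul_of_mem_projSet hp hcontr,
      dist_le_one_add_mul_infDist_of_mem_projSet hp hcontr⟩
  have horbit := mem_closedBall_and_infDist_le_of_step hρ0 hρ1 hw hstep hx0
  set c := (1 + ρ) * infDist (x 0) C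
  have hgeom : ∀ n, dist (x n) (x (n + 1)) ≤ c * ρ ^ n := fun n =>
    (hstep n (horbit n).1).2.trans <| by
      rw [mul_assoc, mul_comm _ (ρ ^ n)]; gcongr; exact (horbit n).2
  obtain ⟨xb, hxb⟩ := cauchySeq_tendsto_of_complete (cauchySeq_of_le_geometric ρ c hρ1 hgeom)
  have hinfDist : Tendsto (fun n => infDist (x n) C) atTop (𝓝 0) := by
    refine squeeze_zero (fun _ => infDist_nonneg) (fun n => (horbit n).2) ?_
    simpa using (tendsto_pow_atTop_nhds_zero_of_lt_one hρ0 hρ1).mul_const (infDist (x 0) C)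
  refine ⟨xb, ⟨hCcl.mem_of_tendsto_infDist_zero ⟨w, hw⟩ hxb hinfDist,
    isClosed_closedBall.mem_of_tendsto hxb (.of_forall fun n => (horbit n).1)⟩, fun n => ?_⟩
  have hD₀ : infDist (x 0) C ≤ ‖x 0 - w‖ := by
    simpa only [dist_eq_norm] using infDist_le_dist_of_mem (x := x 0) hw
  calc ‖x n - xb‖ = dist (x n) xb := (dist_eq_norm _ _).symm
    _ ≤ c * ρ ^ n / (1 - ρ) := dist_le_of_le_geometric_of_tendsto ρ c hρ1 hgeom hxb n
    _ ≤ ((1 + ρ) * ‖x 0 - w‖ / (1 - ρ)) * ρ ^ n := by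
      rw [div_mul_eq_mul_div]
      gcongr
      exact mul_le_mul_of_nonneg_left hD₀ (by linarith)

/-- local R-linear convergence for operators contracting toward
projections onto `C` (cf. [Pha14, Proposition 2.11]). -/
theorem rlinear_convergence_of_contraction_toward_proj
    {X : Type*} [NormedAddCommGroup X] [InnerProductSpace ℝ X] [FiniteDimensional ℝ X]
    (T : X → Set X) (C : Set X) (hCcl : IsClosed C) (hCne : C.Nonempty)
    (w : X) (hw : w ∈ C) (δ ρ : ℝ) (hδ : 0 < δ) (hρ0 : 0 ≤ ρ) (hρ1 : ρ < 1)
    (hT : ∀ x ∈ closedBall w δ, ∀ xp ∈ T x, ∀ p ∈ projSet C x,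
      ‖xp - p‖ ≤ ρ * ‖x - p‖)
    (x : ℕ → X) (hx : ∀ n, x (n + 1) ∈ T (x n))
    (hx0 : x 0 ∈ closedBall w (δ * (1 - ρ) / 2)) :
    ∃ xb ∈ C ∩ closedBall w δ,
      ∀ n, ‖x n - xb‖ ≤ ((1 + ρ) * ‖x 0 - w‖ / (1 - ρ)) * ρ ^ n :=
  rlinear_convergence_of_contraction_toward_proj_general T C hCcl w hw δ ρ hρ0 hρ1 hT x hx hx0
end

section
/- Let C be a convex subset of a Euclidean space X that is a τ-enlargement (i.e., C = D + B(0,τ) for a nonempty closed set D) with τ > 0, let x ∉ C, and let p = P_C x. Then there exists q ∈ D such that ‖x - q‖ = ‖x - p‖ + ‖p - q‖ = d_C(x) + τ; in particular ‖p - q‖ = τ and p lies on the segment [x, q]. -/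
open Metric Set Pointwise

/-!
Let `q ∈ D` be a nearest point to `x`, at distance `δ = d_D(x)`; since `x ∉ C`, `τ < δ`.
Every point of `D + B(0,τ)` is within `τ` of `D`, so its distance to `x` is at least `δ - τ`,
and the point `p'` of `[q, x]` at distance `τ` from `q` lies in `C` at distance exactly
`δ - τ` from `x`. Hence `p'` is a nearest point of `C`, and since nearest points in a convex
subset of a strictly convex space are unique (the midpoint of two of them would be strictly
closer), `p = p'`, which lies on `[x, q]` at distance `τ` from `q`.
-/

section StrictConvex

variable {E : Type*} [NormedAddCommGroup E] [NormedSpace ℝ E] [StrictConvexSpace ℝ E]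

theorem Convex.eq_of_mem_projSet {C : Set E} (hC : Convex ℝ C) {x p p' : E}
    (hp : p ∈ projSet C x) (hp' : p' ∈ projSet C x) : p = p' := by
  by_contra hne
  have hmid : (1 / 2 : ℝ) • p + (1 / 2 : ℝ) • p' ∈ ball x (infDist x C) :=
    combo_mem_ball_of_ne (by rw [mem_closedBall, dist_comm, hp.2])
      (by rw [mem_closedBall, dist_comm, hp'.2]) hne (by norm_num) (by norm_num) (by norm_num)
  rw [mem_ball, dist_comm] at hmid
  exact (infDist_le_dist_of_mem (hC hp.1 hp'.1 (by norm_num) (by norm_num) (by norm_num))).not_gt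
    hmid

end StrictConvex

section Enlargement

variable {E : Type*} [SeminormedAddCommGroup E] {D : Set E} {τ : ℝ} {x y q : E}

theorem infDist_sub_le_dist_of_mem_add_closedBall (hy : y ∈ D + closedBall 0 τ) :
    infDist x D - τ ≤ dist x y := by
  obtain ⟨d, hd, b, hb, rfl⟩ := hy
  rw [mem_closedBall_zero_iff] at hb
  have hdb : dist (d + b) d = ‖b‖ := by simp [dist_eq_norm]
  linarith [infDist_le_dist_of_mem (x := x) hd, dist_triangle x (d + b) d]

theorem lt_dist_of_notMem_add_closedBall (hx : x ∉ D + closedBall 0 τ) (hq : q ∈ D) :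
    τ < dist q x := by
  by_contra! h
  exact hx ⟨q, hq, x - q, by rwa [mem_closedBall_zero_iff, ← dist_eq_norm'], add_sub_cancel q x⟩

end Enlargement

section Ray

open AffineMap

variable {E : Type*} [NormedAddCommGroup E] [NormedSpace ℝ E] {D : Set E} {τ : ℝ} {x q : E}

theorem dist_lineMap_div_dist_left (hqx : q ≠ x) (hτ : 0 ≤ τ) :
    dist (lineMap q x (τ / dist q x)) q = τ := by
  rw [dist_lineMap_left, Real.norm_of_nonneg (by positivity),
    div_mul_cancel₀ _ (dist_ne_zero.2 hqx)]

theorem dist_lineMap_div_dist_right (hτ : 0 ≤ τ) (hτq : τ < dist q x) :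
    dist (lineMap q x (τ / dist q x)) x = dist q x - τ := by
  have hδ : 0 < dist q x := hτ.trans_lt hτq
  rw [dist_lineMap_right, Real.norm_of_nonneg (by rw [sub_nonneg, div_le_one hδ]; exact hτq.le),
    sub_mul, one_mul, div_mul_cancel₀ _ hδ.ne']

theorem lineMap_mem_projSet_add_closedBall (hq : q ∈ D) (hxq : infDist x D = dist x q)
    (hτ : 0 ≤ τ) (hτq : τ < dist q x) :
    lineMap q x (τ / dist q x) ∈ projSet (D + closedBall 0 τ) x := by
  have hqx : q ≠ x := dist_pos.1 (hτ.trans_lt hτq)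
  have hmem : lineMap q x (τ / dist q x) ∈ D + closedBall 0 τ :=
    ⟨q, hq, lineMap q x (τ / dist q x) - q,
      by rw [mem_closedBall_zero_iff, ← dist_eq_norm, dist_lineMap_div_dist_left hqx hτ],
      add_sub_cancel q _⟩
  refine ⟨hmem, le_antisymm ?_ (infDist_le_dist_of_mem hmem)⟩
  rw [dist_comm, dist_lineMap_div_dist_right hτ hτq, le_infDist ⟨_, hmem⟩, dist_comm, ← hxq]
  exact fun y hy => infDist_sub_le_dist_of_mem_add_closedBall hy

end Ray

/-- for a convex `τ`-enlargement `C = D + B(0,τ)`, the projection of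
an exterior point aligns with a point `q ∈ D` at distance `τ` beyond `p`. -/
theorem enlargement_projection_alignment
    {X : Type*} [NormedAddCommGroup X] [InnerProductSpace ℝ X] [FiniteDimensional ℝ X]
    (D : Set X) (hDne : D.Nonempty) (hDcl : IsClosed D) (τ : ℝ) (hτ : 0 < τ)
    (C : Set X) (hC : C = D + closedBall 0 τ) (hconv : Convex ℝ C)
    (x : X) (hx : x ∉ C) (p : X) (hp : p ∈ projSet C x) :
    ∃ q ∈ D, ‖x - q‖ = ‖x - p‖ + ‖p - q‖ ∧
      ‖x - q‖ = Metric.infDist x C + τ ∧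
      ‖p - q‖ = τ ∧ p ∈ segment ℝ x q := by
  subst hC
  obtain ⟨q, hqD, hxq⟩ := hDcl.exists_infDist_eq_dist hDne x
  have hτq : τ < dist q x := lt_dist_of_notMem_add_closedBall hx hqD
  have hqx : q ≠ x := dist_pos.1 (hτ.trans hτq)
  have hp' : p = AffineMap.lineMap q x (τ / dist q x) :=
    Convex.eq_of_mem_projSet hconv hp (lineMap_mem_projSet_add_closedBall hqD hxq hτ.le hτq)
  have hpq : dist p q = τ := hp' ▸ dist_lineMap_div_dist_left hqx hτ.le
  have hpx : dist p x = dist q x - τ := hp' ▸ dist_lineMap_div_dist_right hτ.le hτq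
  have hCx : infDist x (D + closedBall 0 τ) = dist q x - τ := by rw [← hp.2, dist_comm, hpx]
  refine ⟨q, hqD, ?_, ?_, by rw [← dist_eq_norm, hpq], ?_⟩
  · rw [← dist_eq_norm, ← dist_eq_norm, ← dist_eq_norm, dist_comm x p, hpx, hpq, dist_comm]
    ring
  · rw [← dist_eq_norm, hCx, dist_comm]
    ring
  · rw [segment_symm, hp']
    refine lineMap_mem_segment ℝ q x ⟨by positivity, ?_⟩
    rw [div_le_one (hτ.trans hτq)]
    exact hτq.le
end

section
/- Let L be an affine subspace of a Euclidean space X, C a nonempty closed subset of X with C ⊆ L, and λ ≥ 0. Then (Id - P_L) ∘ P_C^λ = (1 - λ)(Id - P_L), in the sense that for every x ∈ X and every y ∈ P_C^λ x, y - P_L y = (1-λ)(x - P_L x); moreover P_L P_C^λ x = P_C^λ P_L x as subsets of X. -/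
open Metric Set RealInnerProductSpace

/-- affine reduction identities for relaxed projectors. -/
theorem affine_reduction_relaxProj
    {X : Type*} [NormedAddCommGroup X] [InnerProductSpace ℝ X] [FiniteDimensional ℝ X]
    (L : AffineSubspace ℝ X) (C : Set X) (hCne : C.Nonempty) (hCcl : IsClosed C)
    (hCL : C ⊆ (L : Set X)) (l : ℝ) (hl : 0 ≤ l)
    (PL : X → X)
    (hPL : ∀ x : X, PL x ∈ L ∧ ∀ y ∈ L, ⟪x - PL x, y - PL x⟫ = 0) :
    (∀ x : X, ∀ y ∈ relaxProj C l x, y - PL y = (1 - l) • (x - PL x)) ∧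
    (∀ x : X, PL '' relaxProj C l x = relaxProj C l (PL x)) := by
  classical
  -- uniqueness of the point satisfying the orthogonality characterization
  have huniq : ∀ y z : X, z ∈ L → (∀ w ∈ L, ⟪y - z, w - z⟫ = 0) → PL y = z := by
    intro y z hz hz'
    have h1 : ⟪y - PL y, z - PL y⟫ = 0 := (hPL y).2 z hz
    have h2 : ⟪y - z, PL y - z⟫ = 0 := hz' (PL y) (hPL y).1
    have h3 : ⟪z - PL y, z - PL y⟫ = 0 := by
      have hd : (z - PL y) = (y - PL y) - (y - z) := by abel
      calc ⟪z - PL y, z - PL y⟫ = ⟪(y - PL y) - (y - z), z - PL y⟫ := by rw [← hd]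
        _ = ⟪y - PL y, z - PL y⟫ - ⟪y - z, z - PL y⟫ := inner_sub_left _ _ _
        _ = 0 := by
            have hneg : ⟪y - z, z - PL y⟫ = -⟪y - z, PL y - z⟫ := by
              rw [← inner_neg_right]; congr 1; abel
            rw [h1, hneg, h2]; ring
    have h4 : z - PL y = 0 := inner_self_eq_zero.mp h3
    exact (sub_eq_zero.mp h4).symm
  -- affine combination formula for PL
  have haff : ∀ x p : X, p ∈ L →
      PL ((1 - l) • x + l • p) = (1 - l) • PL x + l • p := by
    intro x p hp
    apply huniq
    · have hz : (1 - l) • (PL x -ᵥ p) +ᵥ p ∈ L :=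
        AffineSubspace.smul_vsub_vadd_mem L (1 - l) (hPL x).1 hp hp
      have : (1 - l) • PL x + l • p = (1 - l) • (PL x -ᵥ p) +ᵥ p := by
        simp only [vsub_eq_sub, vadd_eq_add]
        module
      rw [this]; exact hz
    · intro w hw
      have hdiff : ((1 - l) • x + l • p) - ((1 - l) • PL x + l • p)
          = (1 - l) • (x - PL x) := by module
      have hwmem : l • (PL x -ᵥ p) +ᵥ w ∈ L :=
        AffineSubspace.smul_vsub_vadd_mem L l (hPL x).1 hp hw
      have hw' : ⟪x - PL x, (l • (PL x -ᵥ p) +ᵥ w) - PL x⟫ = 0 :=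
        (hPL x).2 _ hwmem
      have heq : (l • (PL x -ᵥ p) +ᵥ w) - PL x
          = w - ((1 - l) • PL x + l • p) := by
        simp only [vsub_eq_sub, vadd_eq_add]
        module
      rw [hdiff, real_inner_smul_left, ← heq, hw', mul_zero]
  -- Pythagoras
  have hpyth : ∀ x p : X, p ∈ L →
      dist x p ^ 2 = ‖x - PL x‖ ^ 2 + dist (PL x) p ^ 2 := by
    intro x p hp
    have hio : ⟪x - PL x, PL x - p⟫ = 0 := by
      have := (hPL x).2 p hp
      have hn : (PL x - p) = -(p - PL x) := by abel
      rw [hn, inner_neg_right, this, neg_zero]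
    have hsum : x - p = (x - PL x) + (PL x - p) := by abel
    rw [dist_eq_norm, dist_eq_norm, hsum, norm_add_sq_real, hio]
    ring
  -- monotonicity
  have hmono : ∀ x p q : X, p ∈ L → q ∈ L →
      (dist x p ≤ dist x q ↔ dist (PL x) p ≤ dist (PL x) q) := by
    intro x p q hp hq
    rw [← pow_le_pow_iff_left₀ dist_nonneg dist_nonneg two_ne_zero,
        ← pow_le_pow_iff_left₀ (a := dist (PL x) p) dist_nonneg dist_nonneg two_ne_zero,
        hpyth x p hp, hpyth x q hq]
    exact add_le_add_iff_left _
  -- projSet invariance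
  have hproj : ∀ x : X, projSet C x = projSet C (PL x) := by
    intro x
    obtain ⟨q, hqC, hq⟩ := hCcl.exists_infDist_eq_dist hCne (PL x)
    obtain ⟨q', hq'C, hq'⟩ := hCcl.exists_infDist_eq_dist hCne x
    ext p
    simp only [projSet, Set.mem_setOf_eq]
    constructor
    · rintro ⟨hpC, hpd⟩
      refine ⟨hpC, le_antisymm ?_ (infDist_le_dist_of_mem hpC)⟩
      have h1 : dist x p ≤ dist x q := hpd ▸ infDist_le_dist_of_mem hqC
      have h2 : dist (PL x) p ≤ dist (PL x) q :=
        (hmono x p q (hCL hpC) (hCL hqC)).mp h1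
      rw [hq]; exact h2
    · rintro ⟨hpC, hpd⟩
      refine ⟨hpC, le_antisymm ?_ (infDist_le_dist_of_mem hpC)⟩
      have h1 : dist (PL x) p ≤ dist (PL x) q' := by
        rw [hpd]; exact infDist_le_dist_of_mem hq'C
      have h2 : dist x p ≤ dist x q' :=
        (hmono x p q' (hCL hpC) (hCL hq'C)).mpr h1
      calc dist x p ≤ dist x q' := h2
        _ = infDist x C := hq'.symm
  constructor
  · rintro x y ⟨p, hp, rfl⟩
    rw [haff x p (hCL hp.1)]
    module
  · intro x
    ext y
    constructor
    · rintro ⟨z, ⟨p, hp, rfl⟩, rfl⟩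
      refine ⟨p, ?_, (haff x p (hCL hp.1))⟩
      rw [← hproj x]; exact hp
    · rintro ⟨p, hp, rfl⟩
      rw [← hproj x] at hp
      exact ⟨(1 - l) • x + l • p, ⟨p, hp, rfl⟩, haff x p (hCL hp.1)⟩
end

section
/- Let A, B be nonempty closed subsets of a Euclidean space X, L an affine subspace containing A ∪ B, and for each n let λ_n, μ_n ∈ (0,2], α_n ∈ (0,1). Suppose (x_n) satisfies x_{n+1} ∈ (1-α_n)x_n + α_n P_B^{μ_n} P_A^{λ_n} x_n, and set y_n := P_L x_n. Then (y_n) satisfies y_{n+1} ∈ (1-α_n)y_n + α_n P_B^{μ_n} P_A^{λ_n} y_n, and x_{n+1} - y_{n+1} = ((1-α_n) + α_n(1-λ_n)(1-μ_n))(x_n - y_n) for all n. -/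
open Metric Set RealInnerProductSpace

set_option linter.unusedSectionVars false

section Aux
variable {X : Type*} [NormedAddCommGroup X] [InnerProductSpace ℝ X]
variable {L : AffineSubspace ℝ X} {PL : X → X}

lemma PL_unique (hPL : ∀ x : X, PL x ∈ L ∧ ∀ y ∈ L, ⟪x - PL x, y - PL x⟫ = 0)
    {z w : X} (hw : w ∈ L) (horth : ∀ y ∈ (L : Set X), ⟪z - w, y - w⟫ = 0) : PL z = w := by
  obtain ⟨h1, h2⟩ := hPL z
  have e1 : ⟪z - PL z, w - PL z⟫ = 0 := h2 w hw
  have e2 : ⟪z - w, PL z - w⟫ = 0 := horth (PL z) h1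
  have e3 : ⟪z - PL z, PL z - w⟫ = 0 := by
    rw [← neg_sub w (PL z), inner_neg_right, e1, neg_zero]
  have key : ⟪PL z - w, PL z - w⟫ = (0 : ℝ) := by
    calc ⟪PL z - w, PL z - w⟫
        = ⟪z - w, PL z - w⟫ - ⟪z - PL z, PL z - w⟫ := by
          rw [← inner_sub_left]; congr 1; abel
      _ = 0 := by rw [e2, e3, sub_zero]
  exact sub_eq_zero.mp (inner_self_eq_zero.mp key)

lemma PL_fix (hPL : ∀ x : X, PL x ∈ L ∧ ∀ y ∈ L, ⟪x - PL x, y - PL x⟫ = 0)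
    {p : X} (hp : p ∈ L) : PL p = p := by
  refine PL_unique hPL hp fun y _ => ?_
  simp

lemma PL_affine (hPL : ∀ x : X, PL x ∈ L ∧ ∀ y ∈ L, ⟪x - PL x, y - PL x⟫ = 0)
    (l : ℝ) (a b : X) :
    PL ((1 - l) • a + l • b) = (1 - l) • PL a + l • PL b := by
  have ha := hPL a
  have hb := hPL b
  have hwL : (1 - l) • PL a + l • PL b ∈ L := by
    have h := L.smul_vsub_vadd_mem (1 - l) ha.1 hb.1 hb.1
    have : (1 - l) • (PL a -ᵥ PL b) +ᵥ PL b = (1 - l) • PL a + l • PL b := by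
      simp only [vsub_eq_sub, vadd_eq_add]; module
    rwa [this] at h
  refine PL_unique hPL hwL fun y hy => ?_
  have hz : ((1 - l) • a + l • b) - ((1 - l) • PL a + l • PL b)
      = (1 - l) • (a - PL a) + l • (b - PL b) := by module
  have hortha : ⟪a - PL a, y - ((1 - l) • PL a + l • PL b)⟫ = 0 := by
    have hy' : y - ((1 - l) • PL a + l • PL b)
        = (y - PL a) - (((1 - l) • PL a + l • PL b) - PL a) := by abel
    rw [hy', inner_sub_right, ha.2 y hy, ha.2 _ hwL, sub_zero]
  have horthb : ⟪b - PL b, y - ((1 - l) • PL a + l • PL b)⟫ = 0 := by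
    have hy' : y - ((1 - l) • PL a + l • PL b)
        = (y - PL b) - (((1 - l) • PL a + l • PL b) - PL b) := by abel
    rw [hy', inner_sub_right, hb.2 y hy, hb.2 _ hwL, sub_zero]
  rw [hz, inner_add_left, real_inner_smul_left, real_inner_smul_left,
    hortha, horthb, mul_zero, mul_zero, add_zero]

lemma mem_projSet_iff {C : Set X} (hC : C.Nonempty) {x p : X} :
    p ∈ projSet C x ↔ p ∈ C ∧ ∀ q ∈ C, dist x p ≤ dist x q := by
  constructor
  · rintro ⟨hp, hd⟩
    exact ⟨hp, fun q hq => hd ▸ Metric.infDist_le_dist_of_mem hq⟩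
  · rintro ⟨hp, hmin⟩
    refine ⟨hp, le_antisymm ?_ (Metric.infDist_le_dist_of_mem hp)⟩
    by_contra h
    push_neg at h
    obtain ⟨q, hq, hlt⟩ := (Metric.infDist_lt_iff hC).mp h
    exact absurd (hmin q hq) (not_le.mpr hlt)

lemma pythag (hPL : ∀ x : X, PL x ∈ L ∧ ∀ y ∈ L, ⟪x - PL x, y - PL x⟫ = 0)
    (x : X) {q : X} (hq : q ∈ L) :
    dist x q ^ 2 = ‖x - PL x‖ ^ 2 + dist (PL x) q ^ 2 := by
  have h := (hPL x).2 q hq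
  have hinner : ⟪x - PL x, PL x - q⟫ = 0 := by
    rw [← neg_sub q (PL x), inner_neg_right, h, neg_zero]
  have hsplit : x - q = (x - PL x) + (PL x - q) := by abel
  rw [dist_eq_norm, dist_eq_norm, hsplit, norm_add_sq_real, hinner]
  ring

lemma projSet_shadow (hPL : ∀ x : X, PL x ∈ L ∧ ∀ y ∈ L, ⟪x - PL x, y - PL x⟫ = 0)
    {C : Set X} (hC : C.Nonempty) (hCL : C ⊆ (L : Set X)) (x : X) :
    projSet C x = projSet C (PL x) := by
  ext p
  rw [mem_projSet_iff hC, mem_projSet_iff hC]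
  have key : ∀ p q : X, p ∈ C → q ∈ C →
      (dist x p ≤ dist x q ↔ dist (PL x) p ≤ dist (PL x) q) := by
    intro p q hp hq
    have h1 := pythag hPL x (hCL hp)
    have h2 := pythag hPL x (hCL hq)
    rw [← pow_le_pow_iff_left₀ dist_nonneg dist_nonneg (two_ne_zero),
      ← pow_le_pow_iff_left₀ (dist_nonneg (x := PL x)) dist_nonneg (two_ne_zero)]
    constructor <;> intro h <;> nlinarith
  constructor <;> rintro ⟨hp, hmin⟩ <;> refine ⟨hp, fun q hq => ?_⟩
  · exact (key p q hp hq).mp (hmin q hq)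
  · exact (key p q hp hq).mpr (hmin q hq)

end Aux


/-- shadows of generalized Douglas–Rachford sequences on an affine
subspace containing `A ∪ B` are again generalized DR sequences, and the normal
component contracts by the factor `(1-αₙ) + αₙ(1-λₙ)(1-μₙ)`. -/
theorem shadow_of_generalized_DR
    {X : Type*} [NormedAddCommGroup X] [InnerProductSpace ℝ X] [FiniteDimensional ℝ X]
    (A B : Set X) (hAne : A.Nonempty) (hAcl : IsClosed A)
    (hBne : B.Nonempty) (hBcl : IsClosed B)
    (L : AffineSubspace ℝ X) (hABL : A ∪ B ⊆ (L : Set X))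
    (PL : X → X)
    (hPL : ∀ x : X, PL x ∈ L ∧ ∀ y ∈ L, ⟪x - PL x, y - PL x⟫ = 0)
    (lam mu al : ℕ → ℝ)
    (hlam : ∀ n, 0 < lam n ∧ lam n ≤ 2) (hmu : ∀ n, 0 < mu n ∧ mu n ≤ 2)
    (hal : ∀ n, 0 < al n ∧ al n < 1)
    (x : ℕ → X)
    (hx : ∀ n, ∃ r ∈ relaxProj A (lam n) (x n), ∃ s ∈ relaxProj B (mu n) r,
      x (n + 1) = (1 - al n) • x n + al n • s) :
    (∀ n, ∃ r ∈ relaxProj A (lam n) (PL (x n)), ∃ s ∈ relaxProj B (mu n) r,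
      PL (x (n + 1)) = (1 - al n) • PL (x n) + al n • s) ∧
    (∀ n, x (n + 1) - PL (x (n + 1)) =
      ((1 - al n) + al n * (1 - lam n) * (1 - mu n)) • (x n - PL (x n))) := by
  have hAL : A ⊆ (L : Set X) := fun a ha => hABL (Or.inl ha)
  have hBL : B ⊆ (L : Set X) := fun b hb => hABL (Or.inr hb)
  have main : ∀ n, (∃ r ∈ relaxProj A (lam n) (PL (x n)), ∃ s ∈ relaxProj B (mu n) r,
      PL (x (n + 1)) = (1 - al n) • PL (x n) + al n • s) ∧
      x (n + 1) - PL (x (n + 1)) =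
        ((1 - al n) + al n * (1 - lam n) * (1 - mu n)) • (x n - PL (x n)) := by
    intro n
    obtain ⟨r, ⟨p, hpA, hr⟩, s, ⟨q, hqB, hsq⟩, hx1⟩ := hx n
    have hpL : p ∈ L := hAL hpA.1
    have hqL : q ∈ L := hBL hqB.1
    -- projection of r
    have hPLr : PL r = (1 - lam n) • PL (x n) + lam n • p := by
      rw [hr, PL_affine hPL, PL_fix hPL hpL]
    have hPLs : PL s = (1 - mu n) • PL r + mu n • q := by
      rw [hsq, PL_affine hPL, PL_fix hPL hqL]
    have hPLx1 : PL (x (n + 1)) = (1 - al n) • PL (x n) + al n • PL s := by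
      rw [hx1, PL_affine hPL]
    have hpA' : p ∈ projSet A (PL (x n)) := by
      rwa [← projSet_shadow hPL hAne hAL]
    have hqB' : q ∈ projSet B (PL r) := by
      rwa [← projSet_shadow hPL hBne hBL]
    constructor
    · exact ⟨PL r, ⟨p, hpA', hPLr⟩, PL s, ⟨q, hqB', hPLs⟩, hPLx1⟩
    · have h1 : r - PL r = (1 - lam n) • (x n - PL (x n)) := by
        rw [hPLr, hr]; module
      have h2 : s - PL s = (1 - mu n) • (r - PL r) := by
        rw [hPLs, hsq]; module
      have h3 : x (n + 1) - PL (x (n + 1))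
          = (1 - al n) • (x n - PL (x n)) + al n • (s - PL s) := by
        rw [hPLx1, hx1]; module
      rw [h3, h2, h1, smul_smul, smul_smul, ← add_smul]
      ring_nf
  exact ⟨fun n => (main n).1, fun n => (main n).2⟩
end

section
/- In ℝ², let C₁ = ℝ₊² (the nonnegative orthant) and C₂ = (-ℝ₊)² (the nonpositive orthant), so C₁ ∩ C₂ = {(0,0)}. If x₀ = (ζ, ξ) ≠ (0,0), then the sequence generated alternately by reflectors R_{C₁} and R_{C₂} (x₁ = R_{C₁}x₀, x₂ = R_{C₂}x₁, x₃ = R_{C₁}x₂, ...) cycles between the two points (|ζ|, |ξ|) and (-|ζ|, -|ξ|) and hence does not converge. -/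
open Metric Set Filter

/-- The reflector `R_C := 2 P_C - Id`, as a set-valued map. -/
noncomputable def reflSet {X : Type*} [NormedAddCommGroup X] [Module ℝ X]
    (C : Set X) (x : X) : Set X :=
  {y | ∃ p ∈ projSet C x, y = (2 : ℝ) • p - x}

/-!
Projecting onto an orthant truncates each coordinate at `0`, so reflecting across `ℝ₊²` replaces
every coordinate by its absolute value and reflecting across `(-ℝ₊)²` by minus it. The iterates
therefore alternate between `|x₀|` and `-|x₀|`, which are distinct because `x₀ ≠ 0`.
-/

section Projection

variable {F : Type*} [NormedAddCommGroup F] [InnerProductSpace ℝ F]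

theorem projSet_eq_singleton_of_inner_nonpos {K : Set F} {x q : F} (hq : q ∈ K)
    (h : ∀ r ∈ K, inner ℝ (x - q) (r - q) ≤ 0) : projSet K x = {q} := by
  have pythagoras : ∀ r ∈ K, ‖x - q‖ ^ 2 + ‖r - q‖ ^ 2 ≤ ‖x - r‖ ^ 2 := by
    intro r hr
    have : x - r = (x - q) - (r - q) := by abel
    rw [this, norm_sub_sq_real (x - q) (r - q)]
    linarith [h r hr]
  have hinf : infDist x K = dist x q := by
    refine le_antisymm (infDist_le_dist_of_mem hq) ((le_infDist ⟨q, hq⟩).2 fun r hr => ?_)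
    rw [dist_eq_norm, dist_eq_norm]
    nlinarith [pythagoras r hr, norm_nonneg (x - q), norm_nonneg (x - r), sq_nonneg ‖r - q‖]
  ext p
  constructor
  · rintro ⟨hp, hdist⟩
    rw [hinf, dist_eq_norm, dist_eq_norm] at hdist
    have hpq : ‖p - q‖ ^ 2 ≤ 0 := by linarith [hdist ▸ pythagoras p hp]
    rwa [sq_nonpos_iff, norm_eq_zero, sub_eq_zero] at hpq
  · rintro rfl
    exact ⟨hq, hinf.symm⟩

theorem reflSet_eq_singleton {K : Set F} {x q : F} (h : projSet K x = {q}) :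
    reflSet K x = {(2 : ℝ) • q - x} := by
  ext y
  simp [reflSet, h]

end Projection

section Orthant

variable {ι : Type*}

noncomputable def coordAbs (v : EuclideanSpace ℝ ι) : EuclideanSpace ℝ ι :=
  WithLp.toLp 2 fun i => |v i|

@[simp]
theorem coordAbs_apply (v : EuclideanSpace ℝ ι) (i : ι) : coordAbs v i = |v i| := rfl

@[simp]
theorem coordAbs_neg (v : EuclideanSpace ℝ ι) : coordAbs (-v) = coordAbs v := by
  ext i; simp

@[simp]
theorem coordAbs_coordAbs (v : EuclideanSpace ℝ ι) : coordAbs (coordAbs v) = coordAbs v := by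
  ext i; simp

theorem coordAbs_eq_zero {v : EuclideanSpace ℝ ι} : coordAbs v = 0 ↔ v = 0 := by
  constructor
  · intro h; ext i; simpa using congrArg (· i) h
  · rintro rfl; ext i; simp

theorem coordAbs_ne_neg_self {v : EuclideanSpace ℝ ι} (hv : v ≠ 0) : coordAbs v ≠ -coordAbs v := by
  rw [Ne, eq_neg_iff_add_eq_zero, ← two_smul ℝ, smul_eq_zero, coordAbs_eq_zero]
  simpa using hv

theorem projSet_nonneg_orthant [Fintype ι] (v : EuclideanSpace ℝ ι) :
    projSet {w : EuclideanSpace ℝ ι | ∀ i, 0 ≤ w i} v = {WithLp.toLp 2 fun i => max (v i) 0} := by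
  refine projSet_eq_singleton_of_inner_nonpos (fun i => le_max_right _ _) fun r hr => ?_
  simp only [PiLp.inner_apply, PiLp.sub_apply, RCLike.inner_apply, conj_trivial]
  refine Finset.sum_nonpos fun i _ => ?_
  rcases le_total 0 (v i) with hv | hv
  · simp [max_eq_left hv]
  · rw [max_eq_right hv]; nlinarith [hr i]

theorem projSet_nonpos_orthant [Fintype ι] (v : EuclideanSpace ℝ ι) :
    projSet {w : EuclideanSpace ℝ ι | ∀ i, w i ≤ 0} v = {WithLp.toLp 2 fun i => min (v i) 0} := by
  refine projSet_eq_singleton_of_inner_nonpos (fun i => min_le_right _ _) fun r hr => ?_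
  simp only [PiLp.inner_apply, PiLp.sub_apply, RCLike.inner_apply, conj_trivial]
  refine Finset.sum_nonpos fun i _ => ?_
  rcases le_total 0 (v i) with hv | hv
  · rw [min_eq_right hv]; nlinarith [hr i]
  · simp [min_eq_left hv]

theorem reflSet_nonneg_orthant [Fintype ι] (v : EuclideanSpace ℝ ι) :
    reflSet {w : EuclideanSpace ℝ ι | ∀ i, 0 ≤ w i} v = {coordAbs v} := by
  rw [reflSet_eq_singleton (projSet_nonneg_orthant v)]
  congr 1
  ext i
  simp only [PiLp.sub_apply, PiLp.smul_apply, smul_eq_mul, coordAbs_apply]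
  rcases le_total 0 (v i) with hv | hv
  · rw [max_eq_left hv, abs_of_nonneg hv]; ring
  · rw [max_eq_right hv, abs_of_nonpos hv]; ring

theorem reflSet_nonpos_orthant [Fintype ι] (v : EuclideanSpace ℝ ι) :
    reflSet {w : EuclideanSpace ℝ ι | ∀ i, w i ≤ 0} v = {-coordAbs v} := by
  rw [reflSet_eq_singleton (projSet_nonpos_orthant v)]
  congr 1
  ext i
  simp only [PiLp.sub_apply, PiLp.smul_apply, PiLp.neg_apply, smul_eq_mul,
    coordAbs_apply]
  rcases le_total 0 (v i) with hv | hv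
  · rw [min_eq_right hv, abs_of_nonneg hv]; ring
  · rw [min_eq_left hv, abs_of_nonpos hv]; ring

end Orthant

theorem not_tendsto_of_odd_even_const {X : Type*} [TopologicalSpace X] [T2Space X]
    {x : ℕ → X} {a b : X} (hab : a ≠ b) (ha : ∀ n, x (2 * n + 1) = a)
    (hb : ∀ n, x (2 * n + 2) = b) : ¬ ∃ l, Tendsto x atTop (nhds l) := by
  rintro ⟨l, hl⟩
  have hodd : Tendsto (fun n => x (2 * n + 1)) atTop (nhds l) :=
    hl.comp (StrictMono.tendsto_atTop fun m n h => by omega)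
  have heven : Tendsto (fun n => x (2 * n + 2)) atTop (nhds l) :=
    hl.comp (StrictMono.tendsto_atTop fun m n h => by omega)
  simp only [ha, hb] at hodd heven
  exact hab (tendsto_nhds_unique tendsto_const_nhds hodd |>.trans
    (tendsto_nhds_unique tendsto_const_nhds heven).symm)

/-- alternating reflections across the nonnegative and nonpositive
orthants of ℝ² cycle between `(|ζ|,|ξ|)` and `(-|ζ|,-|ξ|)` and do not converge. -/
theorem alternating_reflections_cycle
    (x₀ : EuclideanSpace ℝ (Fin 2)) (hx₀ : x₀ ≠ 0)
    (x : ℕ → EuclideanSpace ℝ (Fin 2)) (hinit : x 0 = x₀)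
    (hC1 : ∀ n, Even n →
      x (n + 1) ∈ reflSet {v : EuclideanSpace ℝ (Fin 2) | 0 ≤ v 0 ∧ 0 ≤ v 1} (x n))
    (hC2 : ∀ n, ¬ Even n →
      x (n + 1) ∈ reflSet {v : EuclideanSpace ℝ (Fin 2) | v 0 ≤ 0 ∧ v 1 ≤ 0} (x n)) :
    (∀ n, x (2 * n + 1) = (WithLp.toLp 2 (fun i => |x₀ i|) : EuclideanSpace ℝ (Fin 2)) ∧
      x (2 * n + 2) = -(WithLp.toLp 2 (fun i => |x₀ i|) : EuclideanSpace ℝ (Fin 2))) ∧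
    ¬ ∃ l : EuclideanSpace ℝ (Fin 2), Tendsto x atTop (nhds l) := by
  have hK₁ : {v : EuclideanSpace ℝ (Fin 2) | 0 ≤ v 0 ∧ 0 ≤ v 1} = {v | ∀ i, 0 ≤ v i} := by
    simp [Fin.forall_fin_two]
  have hK₂ : {v : EuclideanSpace ℝ (Fin 2) | v 0 ≤ 0 ∧ v 1 ≤ 0} = {v | ∀ i, v i ≤ 0} := by
    simp [Fin.forall_fin_two]
  have step_odd (n : ℕ) : x (2 * n + 1) = coordAbs (x (2 * n)) := by
    simpa [hK₁, reflSet_nonneg_orthant] using hC1 _ (even_two_mul n)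
  have step_even (n : ℕ) : x (2 * n + 2) = -coordAbs (x (2 * n + 1)) := by
    simpa [hK₂, reflSet_nonpos_orthant] using hC2 _ (Nat.not_even_two_mul_add_one n)
  have cycle : ∀ n, x (2 * n + 1) = coordAbs x₀ ∧ x (2 * n + 2) = -coordAbs x₀ := by
    intro n
    induction n with
    | zero => simp [step_odd 0, step_even 0, hinit]
    | succ n ih =>
      have hodd : x (2 * (n + 1) + 1) = coordAbs x₀ := by
        rw [step_odd, mul_add_one, ih.2, coordAbs_neg, coordAbs_coordAbs]
      exact ⟨hodd, by rw [step_even, hodd, coordAbs_coordAbs]⟩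
  exact ⟨cycle, not_tendsto_of_odd_even_const (coordAbs_ne_neg_self hx₀) (fun n => (cycle n).1)
    fun n => (cycle n).2⟩
end

section
/- Let C be a nonempty closed subset of a Euclidean space X, w ∈ C, ε ≥ 0, δ > 0, τ ≥ 0, α ∈ [0,1]. Suppose C is τ-injectable on B(w, δ/2) and (ε, δ)-regular at w. Then the semi-intrepid projector P_C^{(α,τ)} x := {p + min{α, τ/‖p-x‖}(p - x) : p ∈ P_C x} is (C ∩ B(w,δ), (1+αε)/(1-ε), (1-α)/(1+α))-quasi firmly Fejér monotone on B(w, δ/2): for all x ∈ B(w, δ/2), x₊ ∈ P_C^{(α,τ)}x, x̄ ∈ C ∩ B(w, δ), ‖x₊ - x̄‖² + ((1-α)/(1+α))‖x₊ - x‖² ≤ ((1+αε)/(1-ε))‖x - x̄‖². -/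
open Metric Set RealInnerProductSpace
open scoped Classical

/-- The semi-intrepid projector `P_C^{(α,τ)}`, as a set-valued map.
(Here `τ / ‖p - x‖ = 0` when `p = x`, by Lean's convention `τ / 0 = 0`.) -/
noncomputable def semiIntrepidProj {X : Type*} [NormedAddCommGroup X]
    [InnerProductSpace ℝ X] (C : Set X) (α τ : ℝ) (x : X) : Set X :=
  {y | ∃ p ∈ projSet C x, y = p + (min α (τ / ‖p - x‖)) • (p - x)}

/-- Auxiliary purely algebraic inequality. -/
lemma semiIntrepid_key_poly (α β ε na nb nt ip : ℝ) (hα0 : 0 ≤ α)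
    (hβ0 : 0 ≤ β) (hβα : β ≤ α) (hε0 : 0 ≤ ε) (hε1 : ε < 1)
    (hna : 0 ≤ na) (hnb : 0 ≤ nb)
    (hid : nt ^ 2 = na ^ 2 + nb ^ 2 - 2 * ip) (hip : ip ≤ ε * (na * nb)) :
    nb ^ 2 + 2 * β * ip + β ^ 2 * na ^ 2 + ((1 - α) / (1 + α)) * ((1 + β) ^ 2 * na ^ 2)
      ≤ ((1 + α * ε) / (1 - ε)) * nt ^ 2 := by
  have h1α : (0:ℝ) < 1 + α := by linarith
  have h1ε : (0:ℝ) < 1 - ε := by linarith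
  have h6 : 2 * (1 - ε) * (na * nb) ≤ nt ^ 2 := by nlinarith [sq_nonneg (na - nb)]
  have hc : (1 - ε) * (2 * (1 + β) * ip) ≤ ε * (1 + α) * nt ^ 2 := by
    have h1 : 2 * (1 + β) * ip ≤ 2 * (1 + α) * (ε * (na * nb)) := by
      nlinarith [mul_nonneg (mul_nonneg hε0 hna) hnb]
    have h2 : (1 - ε) * (2 * (1 + α) * (ε * (na * nb))) ≤ ε * (1 + α) * nt ^ 2 := by
      nlinarith [mul_nonneg hε0 h1α.le]
    nlinarith
  have hd : 0 ≤ (1 - ε) * ((1 + β) * ((α - β) * na ^ 2)) :=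
    mul_nonneg h1ε.le (mul_nonneg (by linarith) (mul_nonneg (by linarith) (sq_nonneg na)))
  have key : (1 + α) * (1 - ε) * (nb ^ 2 + 2 * β * ip + β ^ 2 * na ^ 2)
      + (1 - α) * (1 - ε) * ((1 + β) ^ 2 * na ^ 2) ≤ (1 + α) * (1 + α * ε) * nt ^ 2 := by
    rw [hid] at hc ⊢
    nlinarith [mul_le_mul_of_nonneg_left hc h1α.le, hd]
  have hdiv : ((1 + α * ε) / (1 - ε)) * nt ^ 2
      - (nb ^ 2 + 2 * β * ip + β ^ 2 * na ^ 2 + ((1 - α) / (1 + α)) * ((1 + β) ^ 2 * na ^ 2))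
      = ((1 + α) * (1 + α * ε) * nt ^ 2
        - ((1 + α) * (1 - ε) * (nb ^ 2 + 2 * β * ip + β ^ 2 * na ^ 2)
          + (1 - α) * (1 - ε) * ((1 + β) ^ 2 * na ^ 2))) / ((1 + α) * (1 - ε)) := by
    field_simp
  have h := div_nonneg (sub_nonneg.mpr key) (by positivity : (0:ℝ) ≤ (1 + α) * (1 - ε))
  linarith [hdiv ▸ h]

/-- Auxiliary geometric step: the estimate for any relaxation parameter `β ∈ [0, α]`. -/
lemma semiIntrepid_aux
    {X : Type*} [NormedAddCommGroup X] [InnerProductSpace ℝ X]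
    (C : Set X) (w : X) (hw : w ∈ C)
    (ε δ α : ℝ) (hε0 : 0 ≤ ε) (hε1 : ε < 1) (hα0 : 0 ≤ α)
    (hreg : EpsDeltaRegular C w ε δ) :
    ∀ x ∈ closedBall w (δ / 2),
      ∀ p ∈ projSet C x, ∀ β : ℝ, 0 ≤ β → β ≤ α →
      ∀ xb ∈ C ∩ closedBall w δ,
        ‖p + β • (p - x) - xb‖ ^ 2 + ((1 - α) / (1 + α)) * ‖p + β • (p - x) - x‖ ^ 2
          ≤ ((1 + α * ε) / (1 - ε)) * ‖x - xb‖ ^ 2 := by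
  intro x hx p hp β hβ0 hβα xb hxb
  obtain ⟨hpC, hpd⟩ := hp
  obtain ⟨hxbC, hxbB⟩ := hxb
  have hxw : dist x w ≤ δ / 2 := mem_closedBall.mp hx
  have hdx : dist x p ≤ δ / 2 := hpd ▸ le_trans (infDist_le_dist_of_mem hw) hxw
  have hpB : p ∈ closedBall w δ := by
    have : dist p w ≤ dist p x + dist x w := dist_triangle p x w
    rw [mem_closedBall]
    rw [dist_comm] at hdx
    linarith
  have hu : (x - p) ∈ proxNormalCone C p :=
    ⟨1, zero_le_one, x, ⟨hpC, hpd⟩, (one_smul ℝ (x - p)).symm⟩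
  have hregp := hreg p ⟨hpC, hpB⟩ xb ⟨hxbC, hxbB⟩ (x - p) hu
  have hip : ⟪p - x, p - xb⟫ ≤ ε * (‖p - x‖ * ‖p - xb‖) := by
    have h1 : ⟪x - p, p - xb⟫ = -⟪p - x, p - xb⟫ := by
      rw [show x - p = -(p - x) by abel, inner_neg_left]
    have h2 : ‖x - p‖ = ‖p - x‖ := norm_sub_rev x p
    rw [h1, h2] at hregp
    linarith
  have e1 : p + β • (p - x) - xb = (p - xb) + β • (p - x) := by abel
  have e2 : p + β • (p - x) - x = (1 + β) • (p - x) := by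
    rw [add_smul, one_smul]; abel
  have n1 : ‖p + β • (p - x) - xb‖ ^ 2
      = ‖p - xb‖ ^ 2 + 2 * β * ⟪p - x, p - xb⟫ + β ^ 2 * ‖p - x‖ ^ 2 := by
    rw [e1, norm_add_sq_real, real_inner_smul_right, norm_smul, Real.norm_eq_abs,
      abs_of_nonneg hβ0, real_inner_comm]
    ring
  have n2 : ‖p + β • (p - x) - x‖ ^ 2 = (1 + β) ^ 2 * ‖p - x‖ ^ 2 := by
    rw [e2, norm_smul, Real.norm_eq_abs, abs_of_nonneg (by linarith : (0:ℝ) ≤ 1 + β)]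
    ring
  have n3 : ‖x - xb‖ ^ 2 = ‖p - x‖ ^ 2 + ‖p - xb‖ ^ 2 - 2 * ⟪p - x, p - xb⟫ := by
    rw [show x - xb = (p - xb) - (p - x) by abel, norm_sub_sq_real, real_inner_comm]
    ring
  rw [n1, n2]
  exact semiIntrepid_key_poly α β ε ‖p - x‖ ‖p - xb‖ ‖x - xb‖ ⟪p - x, p - xb⟫ hα0 hβ0 hβα
    hε0 hε1 (norm_nonneg _) (norm_nonneg _) n3 hip

/-- quasi firm Fejér monotonicity of semi-intrepid projectors. -/
theorem semiIntrepid_quasi_firmly_fejer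
    {X : Type*} [NormedAddCommGroup X] [InnerProductSpace ℝ X] [FiniteDimensional ℝ X]
    (C : Set X) (hCne : C.Nonempty) (hCcl : IsClosed C) (w : X) (hw : w ∈ C)
    (ε δ τ α : ℝ) (hε0 : 0 ≤ ε) (hε1 : ε < 1) (hδ : 0 < δ) (hτ : 0 ≤ τ)
    (hα0 : 0 ≤ α) (hα1 : α ≤ 1)
    (hinj : Injectable C τ (closedBall w (δ / 2)))
    (hreg : EpsDeltaRegular C w ε δ) :
    ∀ x ∈ closedBall w (δ / 2), ∀ xp ∈ semiIntrepidProj C α τ x,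
      ∀ xb ∈ C ∩ closedBall w δ,
        ‖xp - xb‖ ^ 2 + ((1 - α) / (1 + α)) * ‖xp - x‖ ^ 2
          ≤ ((1 + α * ε) / (1 - ε)) * ‖x - xb‖ ^ 2 := by
  intro x hx xp hxp xb hxb
  obtain ⟨p, hp, rfl⟩ := hxp
  exact semiIntrepid_aux C w hw ε δ α hε0 hε1 hα0 hreg x hx p hp
    (min α (τ / ‖p - x‖)) (le_min hα0 (div_nonneg hτ (norm_nonneg _)))
    (min_le_left _ _) xb hxb
end

section
/- Let A, B be closed subsets of a Euclidean space X, w ∈ A ∩ B, ε₁ ∈ [0, 1/3], ε₂ ∈ [0,1), δ > 0, λ, μ ∈ (0,2], α ∈ (0,1]. Suppose A is (ε₁, δ)-regular at w and B is (ε₂, √2 δ)-regular at w. Then the generalized Douglas–Rachford operator T := (1-α)Id + α P_B^μ P_A^λ is (A ∩ B ∩ B(w, δ), γ, β)-quasi firmly Fejér monotone on B(w, δ/2), with γ = 1 - α + α(1 + λε₁/(1-ε₁))(1 + με₂/(1-ε₂)) and β = (1-α)/α. -/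
set_option maxHeartbeats 1000000


open Metric Set RealInnerProductSpace

/-- The generalized Douglas–Rachford operator
`T := (1-α)Id + α P_B^μ P_A^λ`, as a set-valued map. -/
noncomputable def genDR {X : Type*} [NormedAddCommGroup X] [Module ℝ X]
    (A B : Set X) (l m α : ℝ) (x : X) : Set X :=
  {y | ∃ r ∈ relaxProj A l x, ∃ s ∈ relaxProj B m r, y = (1 - α) • x + α • s}

lemma relaxProj_step {X : Type*} [NormedAddCommGroup X] [InnerProductSpace ℝ X]
    (ε lam : ℝ) (x p z : X) (hε0 : 0 ≤ ε) (hε1 : ε < 1) (hl0 : 0 < lam) (_hl2 : lam ≤ 2)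
    (hreg : ⟪x - p, p - z⟫ ≥ -ε * (‖x - p‖ * ‖p - z‖)) :
    ‖((1 - lam) • x + lam • p) - z‖ ^ 2
      + ((2 - lam) / lam) * ‖x - ((1 - lam) • x + lam • p)‖ ^ 2
      ≤ (1 + lam * ε / (1 - ε)) * ‖x - z‖ ^ 2 := by
  have h1ε : 0 < 1 - ε := by linarith
  have hrz : ((1 - lam) • x + lam • p) - z = (x - z) - lam • (x - p) := by module
  have hxr : x - ((1 - lam) • x + lam • p) = lam • (x - p) := by module
  set u := x - p with hu
  set d := ‖u‖ with hd
  set q := ‖p - z‖ with hq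
  set D := ‖x - z‖ with hD
  set t := ⟪u, x - z⟫ with ht
  have hpz : p - z = (x - z) - u := by module
  have h2 : ⟪u, p - z⟫ = t - d ^ 2 := by
    rw [hpz, inner_sub_right, real_inner_self_eq_norm_sq]
  have h3 : q ^ 2 = D ^ 2 - 2 * t + d ^ 2 := by
    rw [hq, hpz, @norm_sub_sq_real, real_inner_comm]
  have hreg' : t - d ^ 2 ≥ -ε * (d * q) := by rw [← h2]; exact hreg
  have e1 : ‖((1 - lam) • x + lam • p) - z‖ ^ 2 = D ^ 2 - 2 * (lam * t) + lam ^ 2 * d ^ 2 := by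
    rw [hrz, @norm_sub_sq_real, real_inner_smul_right, norm_smul, Real.norm_eq_abs,
      abs_of_pos hl0, real_inner_comm]
    ring
  have e2 : ((2 - lam) / lam) * ‖x - ((1 - lam) • x + lam • p)‖ ^ 2
      = (2 - lam) * lam * d ^ 2 := by
    rw [hxr, norm_smul, Real.norm_eq_abs, abs_of_pos hl0, mul_pow]
    field_simp
    ring
  rw [e1, e2]
  have hd0 : 0 ≤ d := norm_nonneg _
  have hq0 : 0 ≤ q := norm_nonneg _
  have key : 2 * (1 - ε) * (d * q) ≤ D ^ 2 := by nlinarith [sq_nonneg (d - q)]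
  have k1 : 2 * lam * ε * (d * q) ≤ (lam * ε / (1 - ε)) * D ^ 2 := by
    rw [div_mul_eq_mul_div, le_div_iff₀ h1ε]
    nlinarith [mul_le_mul_of_nonneg_left key (mul_nonneg hl0.le hε0)]
  have k2 : -(2 * lam * t) + 2 * lam * d ^ 2 ≤ 2 * lam * ε * (d * q) := by
    nlinarith [mul_le_mul_of_nonneg_left hreg' (by linarith : (0:ℝ) ≤ 2 * lam)]
  nlinarith [k1, k2]


/-- quasi firm Fejér monotonicity of generalized DR operators. -/
theorem genDR_quasi_firmly_fejer
    {X : Type*} [NormedAddCommGroup X] [InnerProductSpace ℝ X] [FiniteDimensional ℝ X]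
    (A B : Set X) (hAne : A.Nonempty) (hAcl : IsClosed A)
    (hBne : B.Nonempty) (hBcl : IsClosed B)
    (w : X) (hwA : w ∈ A) (hwB : w ∈ B)
    (ε₁ ε₂ δ l m α : ℝ)
    (hε₁0 : 0 ≤ ε₁) (hε₁1 : ε₁ ≤ 1 / 3) (hε₂0 : 0 ≤ ε₂) (hε₂1 : ε₂ < 1)
    (hδ : 0 < δ) (hl0 : 0 < l) (hl2 : l ≤ 2) (hm0 : 0 < m) (hm2 : m ≤ 2)
    (hα0 : 0 < α) (hα1 : α ≤ 1)
    (hregA : EpsDeltaRegular A w ε₁ δ)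
    (hregB : EpsDeltaRegular B w ε₂ (Real.sqrt 2 * δ)) :
    ∀ x ∈ closedBall w (δ / 2), ∀ xp ∈ genDR A B l m α x,
      ∀ xb ∈ A ∩ B ∩ closedBall w δ,
        ‖xp - xb‖ ^ 2 + ((1 - α) / α) * ‖x - xp‖ ^ 2
          ≤ (1 - α + α * ((1 + l * ε₁ / (1 - ε₁)) * (1 + m * ε₂ / (1 - ε₂))))
              * ‖x - xb‖ ^ 2 := by
  intro x hx xp hxp xb hxb
  obtain ⟨r, ⟨a, haP, hra⟩, s, ⟨b, hbP, hsb⟩, hxps⟩ := hxp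
  obtain ⟨⟨hxbA, hxbB⟩, hxbball⟩ := hxb
  have hε₁1' : ε₁ < 1 := by linarith
  have h1ε₁ : 0 < 1 - ε₁ := by linarith
  have h1ε₂ : 0 < 1 - ε₂ := by linarith
  have hxw : ‖x - w‖ ≤ δ / 2 := by
    rw [← dist_eq_norm]; exact mem_closedBall.mp hx
  have hxbw : ‖xb - w‖ ≤ δ := by
    rw [← dist_eq_norm]; exact mem_closedBall.mp hxbball
  -- a is close to w
  have hxa : ‖x - a‖ ≤ ‖x - w‖ := by
    rw [← dist_eq_norm, ← dist_eq_norm, haP.2]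
    exact infDist_le_dist_of_mem hwA
  have haw : ‖a - w‖ ≤ δ := by
    have h := norm_add_le (a - x) (x - w)
    rw [show a - x + (x - w) = a - w by abel] at h
    rw [norm_sub_rev a x] at h
    linarith
  have haA : a ∈ A ∩ closedBall w δ := ⟨haP.1, by rw [mem_closedBall, dist_eq_norm]; exact haw⟩
  have hcone_a : x - a ∈ proxNormalCone A a := ⟨1, zero_le_one, x, haP, (one_smul ℝ _).symm⟩
  -- step A with xb and with w
  have hregA1 := hregA a haA xb ⟨hxbA, hxbball⟩ _ hcone_a
  have hregA2 := hregA a haA w ⟨hwA, mem_closedBall_self hδ.le⟩ _ hcone_a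
  have step1 := relaxProj_step ε₁ l x a xb hε₁0 hε₁1' hl0 hl2 hregA1
  have step1w := relaxProj_step ε₁ l x a w hε₁0 hε₁1' hl0 hl2 hregA2
  rw [← hra] at step1 step1w
  have hcoef : 0 ≤ (2 - l) / l := div_nonneg (by linarith) hl0.le
  have hγ₁2 : 1 + l * ε₁ / (1 - ε₁) ≤ 2 := by
    have : l * ε₁ / (1 - ε₁) ≤ 1 := by
      rw [div_le_one h1ε₁]; nlinarith
    linarith
  have hγ₁0 : 0 ≤ 1 + l * ε₁ / (1 - ε₁) := by
    have : 0 ≤ l * ε₁ / (1 - ε₁) := div_nonneg (mul_nonneg hl0.le hε₁0) h1ε₁.le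
    linarith
  have hr1 : ‖r - xb‖ ^ 2 ≤ (1 + l * ε₁ / (1 - ε₁)) * ‖x - xb‖ ^ 2 := by
    nlinarith [mul_nonneg hcoef (sq_nonneg ‖x - r‖)]
  have hrw2 : ‖r - w‖ ^ 2 ≤ δ ^ 2 / 2 := by
    have h1 : ‖r - w‖ ^ 2 ≤ (1 + l * ε₁ / (1 - ε₁)) * ‖x - w‖ ^ 2 := by
      nlinarith [mul_nonneg hcoef (sq_nonneg ‖x - r‖)]
    have h2 : ‖x - w‖ ^ 2 ≤ (δ / 2) ^ 2 := by
      nlinarith [norm_nonneg (x - w)]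
    nlinarith [sq_nonneg ‖x - w‖]
  -- b is close to w
  have hrb : ‖r - b‖ ≤ ‖r - w‖ := by
    rw [← dist_eq_norm, ← dist_eq_norm, hbP.2]
    exact infDist_le_dist_of_mem hwB
  have hbw1 : ‖b - w‖ ≤ 2 * ‖r - w‖ := by
    have h := norm_add_le (b - r) (r - w)
    rw [show b - r + (r - w) = b - w by abel] at h
    rw [norm_sub_rev b r] at h
    linarith
  have hbw : ‖b - w‖ ≤ Real.sqrt 2 * δ := by
    have h2 : ‖b - w‖ ^ 2 ≤ 2 * δ ^ 2 := by nlinarith [norm_nonneg (r - w), norm_nonneg (b - w)]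
    have h3 : ‖b - w‖ = Real.sqrt (‖b - w‖ ^ 2) := (Real.sqrt_sq (norm_nonneg _)).symm
    rw [h3]
    calc Real.sqrt (‖b - w‖ ^ 2) ≤ Real.sqrt (2 * δ ^ 2) := Real.sqrt_le_sqrt h2
      _ = Real.sqrt 2 * δ := by
          rw [Real.sqrt_mul (by norm_num : (0:ℝ) ≤ 2), Real.sqrt_sq hδ.le]
  have hsqrt2 : (1 : ℝ) ≤ Real.sqrt 2 := by
    have := Real.sqrt_le_sqrt (by norm_num : (1:ℝ) ≤ 2)
    simpa using this
  have hδle : δ ≤ Real.sqrt 2 * δ := by nlinarith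
  have hbB : b ∈ B ∩ closedBall w (Real.sqrt 2 * δ) :=
    ⟨hbP.1, by rw [mem_closedBall, dist_eq_norm]; exact hbw⟩
  have hxbB' : xb ∈ B ∩ closedBall w (Real.sqrt 2 * δ) :=
    ⟨hxbB, by rw [mem_closedBall, dist_eq_norm]; linarith⟩
  have hcone_b : r - b ∈ proxNormalCone B b := ⟨1, zero_le_one, r, hbP, (one_smul ℝ _).symm⟩
  have hregB1 := hregB b hbB xb hxbB' _ hcone_b
  have step2 := relaxProj_step ε₂ m r b xb hε₂0 hε₂1 hm0 hm2 hregB1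
  rw [← hsb] at step2
  have hcoefm : 0 ≤ (2 - m) / m := div_nonneg (by linarith) hm0.le
  have hγ₂0 : 0 ≤ 1 + m * ε₂ / (1 - ε₂) := by
    have : 0 ≤ m * ε₂ / (1 - ε₂) := div_nonneg (mul_nonneg hm0.le hε₂0) h1ε₂.le
    linarith
  have hs2 : ‖s - xb‖ ^ 2 ≤ (1 + m * ε₂ / (1 - ε₂)) * ‖r - xb‖ ^ 2 := by
    nlinarith [mul_nonneg hcoefm (sq_nonneg ‖r - s‖)]
  have hsx : ‖s - xb‖ ^ 2
      ≤ (1 + l * ε₁ / (1 - ε₁)) * (1 + m * ε₂ / (1 - ε₂)) * ‖x - xb‖ ^ 2 := by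
    calc ‖s - xb‖ ^ 2 ≤ (1 + m * ε₂ / (1 - ε₂)) * ‖r - xb‖ ^ 2 := hs2
      _ ≤ (1 + m * ε₂ / (1 - ε₂)) * ((1 + l * ε₁ / (1 - ε₁)) * ‖x - xb‖ ^ 2) :=
          mul_le_mul_of_nonneg_left hr1 hγ₂0
      _ = (1 + l * ε₁ / (1 - ε₁)) * (1 + m * ε₂ / (1 - ε₂)) * ‖x - xb‖ ^ 2 := by ring
  -- final convexity step
  have hxpx : xp - xb = (1 - α) • (x - xb) + α • (s - xb) := by rw [hxps]; module
  have hxxp : x - xp = α • ((x - xb) - (s - xb)) := by rw [hxps]; module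
  have e1 : ‖xp - xb‖ ^ 2 = (1 - α) ^ 2 * ‖x - xb‖ ^ 2
      + 2 * ((1 - α) * (α * ⟪x - xb, s - xb⟫)) + α ^ 2 * ‖s - xb‖ ^ 2 := by
    rw [hxpx, @norm_add_sq_real, real_inner_smul_left, real_inner_smul_right,
      norm_smul, norm_smul, Real.norm_eq_abs, Real.norm_eq_abs,
      abs_of_nonneg (by linarith : (0:ℝ) ≤ 1 - α), abs_of_pos hα0]
    ring
  have e2 : ‖x - xp‖ ^ 2
      = α ^ 2 * (‖x - xb‖ ^ 2 - 2 * ⟪x - xb, s - xb⟫ + ‖s - xb‖ ^ 2) := by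
    rw [hxxp, norm_smul, Real.norm_eq_abs, abs_of_pos hα0, mul_pow, @norm_sub_sq_real]
  rw [e1, e2]
  have hcoefα : (1 - α) / α * (α ^ 2 * (‖x - xb‖ ^ 2 - 2 * ⟪x - xb, s - xb⟫ + ‖s - xb‖ ^ 2))
      = (1 - α) * α * (‖x - xb‖ ^ 2 - 2 * ⟪x - xb, s - xb⟫ + ‖s - xb‖ ^ 2) := by
    field_simp
  rw [hcoefα]
  nlinarith [mul_le_mul_of_nonneg_left hsx hα0.le]
end
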